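/- arXiv:1109.4184 — 10 statements merged into one kernel-verified Lean document; each statement's English description precedes it below -/
import Mathlib

section
/- For every integer k ≥ 1, every f ∈ ℝ^k, and every valid function π : ℝ^k → ℝ, there exists a minimal valid function π' : ℝ^k → ℝ such that π'(r) ≤ π(r) for all r ∈ ℝ^k. -/
/-!
Valid functions form a set that is closed in the product topology on `ℝ^(ℝ^k)`, since each
feasible solution constrains only finitely many values, and bounded below by `0`. The infimum
of a chain of valid functions is the limit of the chain, hence valid, so Zorn's lemma yields a
minimal valid function below `π`.
-/

open scoped BigOperators

noncomputable section

/-- `ℝ^k` with the Euclidean norm. -/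
abbrev Vec (k : ℕ) := EuclideanSpace ℝ (Fin k)

/-- The point of `ℝ^k` with the given integer coordinates. -/
def intVec (k : ℕ) (w : Fin k → ℤ) : Vec k := WithLp.toLp 2 (fun i => (w i : ℝ))

/-- A feasible solution of the infinite group relaxation: a finitely supported
`s : ℝ^k → ℕ` with `f + ∑ r, s r • r ∈ ℤ^k`. -/
def IsFeasible (k : ℕ) (f : Vec k) (s : Vec k →₀ ℕ) : Prop :=
  ∃ w : Fin k → ℤ, f + ∑ r ∈ s.support, (s r : ℝ) • r = intVec k w

/-- A valid function for the infinite group relaxation. -/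
def IsValid (k : ℕ) (f : Vec k) (π : Vec k → ℝ) : Prop :=
  (∀ r, 0 ≤ π r) ∧
  ∀ s : Vec k →₀ ℕ, IsFeasible k f s → 1 ≤ ∑ r ∈ s.support, π r * (s r : ℝ)

/-- A minimal valid function: no valid `π' ≠ π` with `π' ≤ π` pointwise. -/
def IsMinimal (k : ℕ) (f : Vec k) (π : Vec k → ℝ) : Prop :=
  IsValid k f π ∧ ¬ ∃ π' : Vec k → ℝ, IsValid k f π' ∧ π' ≠ π ∧ ∀ r, π' r ≤ π r

/-- `S(θ)`: the feasible solutions satisfying the inequality of `θ` at equality. -/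
def Ssol (k : ℕ) (f : Vec k) (θ : Vec k → ℝ) : Set (Vec k →₀ ℕ) :=
  {s | IsFeasible k f s ∧ ∑ r ∈ s.support, θ r * (s r : ℝ) = 1}

/-- A facet. -/
def IsFacet (k : ℕ) (f : Vec k) (π : Vec k → ℝ) : Prop :=
  IsValid k f π ∧
  ∀ π' : Vec k → ℝ, IsValid k f π' → Ssol k f π ⊆ Ssol k f π' → π' = π

/-- An extreme valid function. -/
def IsExtremeValid (k : ℕ) (f : Vec k) (π : Vec k → ℝ) : Prop :=
  IsValid k f π ∧ ∀ π₁ π₂ : Vec k → ℝ, IsValid k f π₁ → IsValid k f π₂ →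
    (∀ r, π r = (1 / 2) * π₁ r + (1 / 2) * π₂ r) → π₁ = π ∧ π₂ = π

/-- `E(θ)`: the pairs where `θ` is additive. -/
def Eadd (k : ℕ) (θ : Vec k → ℝ) : Set (Vec k × Vec k) :=
  {p | θ (p.1 + p.2) = θ p.1 + θ p.2}

/-- `θ` is genuinely `k`-dimensional: it does not factor through a linear map to `ℝ^(k-1)`. -/
def GenuinelyFullDim (k : ℕ) (θ : Vec k → ℝ) : Prop :=
  ¬ ∃ (φ : Vec (k - 1) → ℝ) (T : Vec k →ₗ[ℝ] Vec (k - 1)), θ = φ ∘ T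

/-- The cone generated by a finite family of vectors. -/
def coneOf {k m : ℕ} (v : Fin m → Vec k) : Set (Vec k) :=
  {x | ∃ lam : Fin m → ℝ, (∀ i, 0 ≤ lam i) ∧ x = ∑ i, lam i • v i}

/-- The cone generated by a set of vectors. -/
def coneOfSet {k : ℕ} (Vs : Set (Vec k)) : Set (Vec k) :=
  {x | ∃ (n : ℕ) (v : Fin n → Vec k) (lam : Fin n → ℝ),
    (∀ i, v i ∈ Vs) ∧ (∀ i, 0 ≤ lam i) ∧ x = ∑ i, lam i • v i}

/-- A polyhedron: an intersection of finitely many closed halfspaces. -/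
def IsPolyhedron {k : ℕ} (P : Set (Vec k)) : Prop :=
  ∃ (n : ℕ) (a : Fin n → Vec k) (b : Fin n → ℝ),
    P = {x | ∀ i, (inner ℝ (a i) x : ℝ) ≤ b i}

/-- A face of a polyhedron cut out by a valid inequality. -/
def IsFace {k : ℕ} (F P : Set (Vec k)) : Prop :=
  ∃ (a : Vec k) (b : ℝ), (∀ x ∈ P, (inner ℝ a x : ℝ) ≤ b) ∧
    F = {x | x ∈ P ∧ (inner ℝ a x : ℝ) = b}

/-- A polyhedral complex in `ℝ^k`. -/
structure PolyhedralComplex (k : ℕ) where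
  cells : Set (Set (Vec k))
  poly : ∀ P ∈ cells, IsPolyhedron P
  faces_mem : ∀ P ∈ cells, ∀ F : Set (Vec k), IsFace F P → F ∈ cells
  inter_face : ∀ P ∈ cells, ∀ Q ∈ cells, IsFace (P ∩ Q) P ∧ IsFace (P ∩ Q) Q

/-- A maximal cell of a polyhedral complex. -/
def IsMaximalCell {k : ℕ} (PC : PolyhedralComplex k) (P : Set (Vec k)) : Prop :=
  P ∈ PC.cells ∧ ∀ Q ∈ PC.cells, P ⊆ Q → Q = P

/-- A pure complex: all maximal cells are full-dimensional. -/
def PolyhedralComplex.Pure {k : ℕ} (PC : PolyhedralComplex k) : Prop :=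
  ∀ P : Set (Vec k), IsMaximalCell PC P → (interior P).Nonempty

/-- A complete complex: the union of the cells is all of `ℝ^k`. -/
def PolyhedralComplex.Complete {k : ℕ} (PC : PolyhedralComplex k) : Prop :=
  ⋃₀ PC.cells = Set.univ

/-- A polyhedral fan: finitely many cells, all of which are cones. -/
def IsFan {k : ℕ} (F : PolyhedralComplex k) : Prop :=
  F.cells.Finite ∧ ∀ C ∈ F.cells, ∀ x ∈ C, ∀ t : ℝ, 0 ≤ t → t • x ∈ C

/-- A locally finite polyhedral complex: near each point it looks like a translated fan. -/
def PolyhedralComplex.LocFinite {k : ℕ} (PC : PolyhedralComplex k) : Prop :=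
  ∀ r : Vec k, ∃ ε : ℝ, 0 < ε ∧ ∃ F : PolyhedralComplex k, IsFan F ∧
    {S : Set (Vec k) | ∃ P ∈ PC.cells, S = P ∩ Metric.ball r ε ∧ S.Nonempty} =
    {S : Set (Vec k) | ∃ C ∈ F.cells,
      S = ((fun x => x + r) '' C) ∩ Metric.ball r ε ∧ S.Nonempty}

/-- `θ` is piecewise linear with cell complex `PC` (pure and complete), the maximal
cell `P` carrying the gradient `grad P`. -/
def IsPWLWith {k : ℕ} (PC : PolyhedralComplex k) (grad : Set (Vec k) → Vec k)
    (θ : Vec k → ℝ) : Prop :=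
  PC.Pure ∧ PC.Complete ∧
  ∀ P : Set (Vec k), IsMaximalCell PC P →
    ∃ δ : ℝ, ∀ x ∈ P, θ x = (inner ℝ (grad P) x : ℝ) + δ

/-- The gradient set of a piecewise linear function. -/
def gradSet {k : ℕ} (PC : PolyhedralComplex k) (grad : Set (Vec k) → Vec k) : Set (Vec k) :=
  {g | ∃ P : Set (Vec k), IsMaximalCell PC P ∧ grad P = g}

theorem IsClosed.isGLB_mem_of_directedOn {α : Type*} [TopologicalSpace α] [Preorder α]
    [InfConvergenceClass α] {s c : Set α} {a : α} (hs : IsClosed s) (hcs : c ⊆ s)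
    (hc : DirectedOn (· ≥ ·) c) (hne : c.Nonempty) (ha : IsGLB c a) : a ∈ s := by
  have : Nonempty c := hne.to_subtype
  have : IsDirected c (· ≥ ·) :=
    ⟨fun a b => let ⟨z, hz, hza, hzb⟩ := hc a a.2 b b.2; ⟨⟨z, hz⟩, hza, hzb⟩⟩
  exact hs.mem_of_tendsto (InfConvergenceClass.tendsto_coe_atBot_isGLB a c ha)
    (Filter.Eventually.of_forall fun x => hcs x.2)

theorem IsClosed.exists_le_minimal {α : Type*} [TopologicalSpace α]
    [ConditionallyCompleteLattice α] [InfConvergenceClass α] {s : Set α} (hs : IsClosed s)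
    (hbdd : BddBelow s) {x : α} (hx : x ∈ s) : ∃ m ≤ x, Minimal (· ∈ s) m := by
  have chain_bdd : ∀ c ⊆ s, IsChain (· ≥ ·) c → ∀ y ∈ c, ∃ lb ∈ s, ∀ z ∈ c, lb ≤ z :=
    fun c hcs hc y hy => ⟨sInf c, hs.isGLB_mem_of_directedOn hcs hc.directedOn ⟨y, hy⟩
      (isGLB_csInf ⟨y, hy⟩ (hbdd.mono hcs)), fun _ hz => csInf_le (hbdd.mono hcs) hz⟩
  exact zorn_le_nonempty₀ (α := αᵒᵈ) s chain_bdd x hx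

theorem isClosed_setOf_isValid (k : ℕ) (f : Vec k) :
    IsClosed {π : Vec k → ℝ | IsValid k f π} := by
  simp only [IsValid, Set.ofPred_and, Set.ofPred_forall]
  refine (isClosed_iInter fun r => isClosed_le continuous_const (continuous_apply r)).inter
    (isClosed_iInter fun s => isClosed_iInter fun _ => isClosed_le continuous_const ?_)
  fun_prop

theorem bddBelow_setOf_isValid (k : ℕ) (f : Vec k) :
    BddBelow {π : Vec k → ℝ | IsValid k f π} :=
  ⟨0, fun _ hπ => hπ.1⟩

theorem IsMinimal.of_minimal {k : ℕ} {f : Vec k} {π : Vec k → ℝ}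
    (hπ : Minimal (IsValid k f) π) : IsMinimal k f π :=
  ⟨hπ.prop, fun ⟨_, hvalid, hne, hle⟩ => hne (hπ.eq_of_le hvalid hle)⟩

theorem statement0_general (k : ℕ) (f : Vec k) (π : Vec k → ℝ)
    (hπ : IsValid k f π) :
    ∃ π' : Vec k → ℝ, IsMinimal k f π' ∧ ∀ r, π' r ≤ π r := by
  obtain ⟨m, hmπ, hm⟩ :=
    (isClosed_setOf_isValid k f).exists_le_minimal (bddBelow_setOf_isValid k f) hπ
  exact ⟨m, IsMinimal.of_minimal hm, hmπ⟩

/-- For every valid function there is a minimal valid function dominated by it. -/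
theorem statement0 (k : ℕ) (hk : 1 ≤ k) (f : Vec k) (π : Vec k → ℝ)
    (hπ : IsValid k f π) :
    ∃ π' : Vec k → ℝ, IsMinimal k f π' ∧ ∀ r, π' r ≤ π r :=
  statement0_general k f π hπ
end
end

section
/- If a valid function π : ℝ^k → ℝ is a facet, then π is extreme. -/
open scoped BigOperators

noncomputable section

theorem Ssol_subset_of_midpoint {k : ℕ} {f : Vec k} {π π₁ π₂ : Vec k → ℝ}
    (h₁ : IsValid k f π₁) (h₂ : IsValid k f π₂)
    (hmid : ∀ r, π r = (1 / 2) * π₁ r + (1 / 2) * π₂ r) :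
    Ssol k f π ⊆ Ssol k f π₁ := by
  rintro s ⟨hfeas, hsum⟩
  have hsplit : ∑ r ∈ s.support, π r * (s r : ℝ) =
      (1 / 2) * ∑ r ∈ s.support, π₁ r * (s r : ℝ) +
        (1 / 2) * ∑ r ∈ s.support, π₂ r * (s r : ℝ) := by
    rw [Finset.mul_sum, Finset.mul_sum, ← Finset.sum_add_distrib]
    exact Finset.sum_congr rfl fun r _ => by rw [hmid r]; ring
  have hge₁ := h₁.2 s hfeas
  have hge₂ := h₂.2 s hfeas
  -- two sums that are each at least 1 and average to 1 are both equal to 1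
  exact ⟨hfeas, by linarith⟩

theorem statement1_general (k : ℕ) (f : Vec k) (π : Vec k → ℝ)
    (hfacet : IsFacet k f π) :
    IsExtremeValid k f π := by
  obtain ⟨hvalid, hmax⟩ := hfacet
  refine ⟨hvalid, fun π₁ π₂ h₁ h₂ hmid => ⟨?_, ?_⟩⟩
  · exact hmax π₁ h₁ (Ssol_subset_of_midpoint h₁ h₂ hmid)
  · exact hmax π₂ h₂ (Ssol_subset_of_midpoint h₂ h₁ fun r => by rw [hmid r]; ring)

/-- If a valid function is a facet, then it is extreme. -/
theorem statement1 (k : ℕ) (hk : 1 ≤ k) (f : Vec k) (π : Vec k → ℝ)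
    (hfacet : IsFacet k f π) :
    IsExtremeValid k f π :=
  statement1_general k f π hfacet
end
end

section
/- Let π : ℝ^k → ℝ be a nonnegative function. Then π is a minimal valid function if and only if π(0) = 0, π is periodic with respect to the lattice ℤ^k, π is subadditive, and π satisfies the symmetry condition π(r) + π(−f − r) = 1 for all r ∈ ℝ^k. -/
open scoped BigOperators

noncomputable section

/-!
Validity survives replacing a point `c` of a feasible solution by any multiset `t` with
`∑ t ≡ c (mod ℤ^k)`, so a minimal `π` satisfies `π c ≤ ∑ π t`; the choices `t = 0`,
`t = {r}` and `t = {a, b}` give `π 0 = 0`, periodicity and subadditivity.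
If `π r + π (-f - r) > 1`, subadditivity gives `(1 - π (-f - m r)) / m < π r` for every
`m ≥ 1`, and these quotients are at most `1 / m`, so some `V < π r` bounds all of them.
Then lowering `π r` to `V` keeps every solution using `m` copies of `r` valid, since the
other points cost at least `π (-f - m r)`; this contradicts minimality.
Conversely, subadditivity and periodicity give `∑ π(r) s(r) ≥ π (-f) = 1`, and symmetry
forces any smaller valid function to agree with `π`.
-/

open Finsupp Filter

section Lattice

variable {k : ℕ}

def intLattice (k : ℕ) : AddSubgroup (Vec k) where
  carrier := Set.range (intVec k)
  add_mem' := by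
    rintro _ _ ⟨v, rfl⟩ ⟨w, rfl⟩
    exact ⟨v + w, by ext i; simp [intVec]⟩
  zero_mem' := ⟨0, by ext i; simp [intVec]⟩
  neg_mem' := by
    rintro _ ⟨w, rfl⟩
    exact ⟨-w, by ext i; simp [intVec]⟩

lemma intVec_mem_intLattice (w : Fin k → ℤ) : intVec k w ∈ intLattice k := ⟨w, rfl⟩

lemma sum_support_smul_eq_linearCombination (s : Vec k →₀ ℕ) :
    ∑ r ∈ s.support, (s r : ℝ) • r = linearCombination ℕ id s := by
  simp [linearCombination_apply, Finsupp.sum, Nat.cast_smul_eq_nsmul]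

lemma sum_support_mul_eq_linearCombination (θ : Vec k → ℝ) (s : Vec k →₀ ℕ) :
    ∑ r ∈ s.support, θ r * (s r : ℝ) = linearCombination ℕ θ s := by
  simp [linearCombination_apply, Finsupp.sum, nsmul_eq_mul, mul_comm]

lemma isFeasible_iff {f : Vec k} {s : Vec k →₀ ℕ} :
    IsFeasible k f s ↔ f + linearCombination ℕ id s ∈ intLattice k := by
  simp only [IsFeasible, sum_support_smul_eq_linearCombination, eq_comm]
  rfl

end Lattice

lemma nsmul_le_of_subadditive {M : Type*} [AddCommMonoid M] {θ : M → ℝ} (h0 : θ 0 = 0)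
    (hsub : ∀ a b, θ (a + b) ≤ θ a + θ b) (n : ℕ) (x : M) : θ (n • x) ≤ n • θ x := by
  simpa using Finset.le_sum_of_subadditive θ h0.le hsub (Finset.range n) fun _ => x

namespace Finsupp

variable {α M : Type*} [AddCommMonoid M]

lemma linearCombination_eq_erase_add (v : α → M) (s : α →₀ ℕ) (c : α) :
    linearCombination ℕ v s = linearCombination ℕ v (s.erase c) + s c • v c := by
  conv_lhs => rw [← erase_add_single c s]
  rw [map_add, linearCombination_single]

lemma linearCombination_update_erase [DecidableEq α] (v : α → M) (s : α →₀ ℕ) (c : α) (x : M) :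
    linearCombination ℕ (Function.update v c x) (s.erase c) =
      linearCombination ℕ v (s.erase c) := by
  refine Finsupp.sum_congr fun r hr => ?_
  have hrc : r ≠ c := by rintro rfl; simp at hr
  simp only [Function.update_of_ne hrc]

lemma linearCombination_nonneg {θ : α → ℝ} (hθ : ∀ r, 0 ≤ θ r) (s : α →₀ ℕ) :
    0 ≤ linearCombination ℕ θ s :=
  Finset.sum_nonneg fun r _ => nsmul_nonneg (hθ r) _

lemma le_linearCombination_of_subadditive {θ : M → ℝ} (h0 : θ 0 = 0)
    (hsub : ∀ a b, θ (a + b) ≤ θ a + θ b) (v : α → M) (s : α →₀ ℕ) :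
    θ (linearCombination ℕ v s) ≤ linearCombination ℕ (θ ∘ v) s :=
  (Finset.le_sum_of_subadditive θ h0.le hsub _ _).trans
    (Finset.sum_le_sum fun _ _ => nsmul_le_of_subadditive h0 hsub _ _)

end Finsupp

lemma exists_lt_forall_le_of_eventually_le {a : ℕ → ℝ} {p q : ℝ} (hlt : ∀ m, a m < p)
    (hq : q < p) (hev : ∀ᶠ m in atTop, a m ≤ q) : ∃ V < p, ∀ m, a m ≤ V := by
  obtain ⟨N, hN⟩ := eventually_atTop.1 hev
  let S := insert q ((Finset.range N).image a)
  refine ⟨S.max' (Finset.insert_nonempty _ _), (S.max'_lt_iff _).2 ?_, fun m => ?_⟩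
  · simp [S, hq, hlt]
  · rcases lt_or_ge m N with hm | hm
    · exact S.le_max' _ (Finset.mem_insert_of_mem (Finset.mem_image_of_mem a (by simpa)))
    · exact (hN m hm).trans (S.le_max' _ (Finset.mem_insert_self _ _))

section GroupRelaxation

variable {k : ℕ} {f : Vec k} {π : Vec k → ℝ}

lemma IsValid.one_le_add_neg_sub (hv : IsValid k f π) (r : Vec k) : 1 ≤ π r + π (-f - r) := by
  have hs : IsFeasible k f (single r 1 + single (-f - r) 1) :=
    isFeasible_iff.2 (by simp)
  have h := hv.2 _ hs
  rwa [sum_support_mul_eq_linearCombination, map_add, linearCombination_single,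
    linearCombination_single, one_smul, one_smul] at h

lemma IsMinimal.eq_of_isValid_of_le (hm : IsMinimal k f π) {π' : Vec k → ℝ}
    (hv : IsValid k f π') (hle : ∀ r, π' r ≤ π r) : π' = π := by
  by_contra hne
  exact hm.2 ⟨π', hv, hne, hle⟩

/-- Otherwise lowering `π` at `c` to `V` would give a smaller valid function. -/
lemma IsMinimal.le_of_forall_isFeasible (hm : IsMinimal k f π) (c : Vec k) {V : ℝ}
    (hV : 0 ≤ V)
    (h : ∀ s, IsFeasible k f s → 1 ≤ linearCombination ℕ π (s.erase c) + s c • V) :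
    π c ≤ V := by
  classical
  have hle : ∀ r, Function.update π c (min (π c) V) r ≤ π r := by
    intro r
    rcases eq_or_ne r c with rfl | hr
    · simp
    · simp [hr]
  have hvalid : IsValid k f (Function.update π c (min (π c) V)) := by
    refine ⟨fun r => ?_, fun s hs => ?_⟩
    · rcases eq_or_ne r c with rfl | hr
      · simp [hm.1.1 r, hV]
      · simp [hr, hm.1.1 r]
    · have hπ := hm.1.2 s hs
      rw [sum_support_mul_eq_linearCombination, linearCombination_eq_erase_add _ _ c] at hπ ⊢
      rw [linearCombination_update_erase, Function.update_self]
      rcases min_cases (π c) V with ⟨hmin, -⟩ | ⟨hmin, -⟩ <;> rw [hmin]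
      exacts [hπ, h s hs]
  have hc := congrFun (hm.eq_of_isValid_of_le hvalid hle) c
  rw [Function.update_self] at hc
  exact hc ▸ min_le_right _ _

lemma IsMinimal.le_linearCombination (hm : IsMinimal k f π) {c : Vec k} (t : Vec k →₀ ℕ)
    (ht : linearCombination ℕ id t - c ∈ intLattice k) : π c ≤ linearCombination ℕ π t := by
  refine hm.le_of_forall_isFeasible c (linearCombination_nonneg hm.1.1 t) fun s hs => ?_
  have hfeas : IsFeasible k f (s.erase c + s c • t) := by
    rw [isFeasible_iff] at hs ⊢
    have e : f + linearCombination ℕ id (s.erase c + s c • t) =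
        (f + linearCombination ℕ id s) + s c • (linearCombination ℕ id t - c) := by
      rw [map_add, map_nsmul, linearCombination_eq_erase_add id s c, smul_sub]
      simp only [id]
      abel
    rw [e]
    exact add_mem hs (AddSubgroup.nsmul_mem _ ht _)
  have h := hm.1.2 _ hfeas
  rwa [sum_support_mul_eq_linearCombination, map_add, map_nsmul] at h

lemma IsMinimal.map_zero (hm : IsMinimal k f π) : π 0 = 0 :=
  le_antisymm (by simpa using hm.le_linearCombination (c := 0) 0 (by simp)) (hm.1.1 0)

lemma IsMinimal.map_add_le (hm : IsMinimal k f π) (a b : Vec k) : π (a + b) ≤ π a + π b := by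
  have h := hm.le_linearCombination (c := a + b) (single a 1 + single b 1) (by simp)
  rw [map_add] at h
  simpa using h

lemma IsMinimal.map_add_of_mem_intLattice (hm : IsMinimal k f π) (r : Vec k) {z : Vec k}
    (hz : z ∈ intLattice k) : π (r + z) = π r := by
  have hle : ∀ r, ∀ z ∈ intLattice k, π (r + z) ≤ π r := fun r z hz => by
    simpa using hm.le_linearCombination (single r 1) (by simpa using neg_mem hz)
  refine le_antisymm (hle r z hz) ?_
  simpa using hle (r + z) (-z) (neg_mem hz)

lemma IsMinimal.le_one (hm : IsMinimal k f π) (c : Vec k) : π c ≤ 1 := by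
  refine hm.le_of_forall_isFeasible c zero_le_one fun s hs => ?_
  rcases eq_or_ne (s c) 0 with hc | hc
  · have h := hm.1.2 s hs
    rw [sum_support_mul_eq_linearCombination, linearCombination_eq_erase_add _ _ c] at h
    simpa [hc] using h
  · calc (1 : ℝ) ≤ s c • (1 : ℝ) := by simpa using Nat.one_le_iff_ne_zero.2 hc
      _ ≤ _ := le_add_of_nonneg_left (linearCombination_nonneg hm.1.1 _)

lemma IsMinimal.add_neg_sub_eq_one (hm : IsMinimal k f π) (r : Vec k) :
    π r + π (-f - r) = 1 := by
  have h0 := hm.map_zero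
  have hsub := hm.map_add_le
  refine le_antisymm ?_ (hm.1.one_le_add_neg_sub r)
  by_contra! hgt
  have hp : 0 < π r := by linarith [hm.le_one (-f - r)]
  -- the price per copy of `r` that solutions with `m` copies of `r` need
  let a : ℕ → ℝ := fun m => (1 - π (-f - m • r)) / m
  have ha : ∀ m, a m < π r := by
    rintro (_ | n)
    · simpa [a] using hp
    · have hsplit : π (-f - r) ≤ π (-f - (n + 1) • r) + n • π r := by
        have e : -f - r = (-f - (n + 1) • r) + n • r := by rw [succ_nsmul]; abel
        rw [e]
        exact (hsub _ _).trans (add_le_add_right (nsmul_le_of_subadditive h0 hsub n r) _)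
      rw [nsmul_eq_mul] at hsplit
      simp only [a, Nat.cast_succ]
      rw [div_lt_iff₀ (by positivity)]
      linarith
  have hev : ∀ᶠ m in atTop, a m ≤ π r / 2 := by
    filter_upwards [tendsto_one_div_atTop_nhds_zero_nat.eventually (ge_mem_nhds (half_pos hp))]
      with m hm'
    exact (div_le_div_of_nonneg_right (by linarith [hm.1.1 (-f - m • r)]) m.cast_nonneg).trans hm'
  obtain ⟨V, hVr, haV⟩ := exists_lt_forall_le_of_eventually_le ha (half_lt_self hp) hev
  have hV : 0 ≤ V := by simpa [a] using haV 0
  refine hVr.not_ge (hm.le_of_forall_isFeasible r hV fun s hs => ?_)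
  have hrest : π (-f - s r • r) ≤ linearCombination ℕ π (s.erase r) := by
    have e : linearCombination ℕ id (s.erase r) =
        (-f - s r • r) + (f + linearCombination ℕ id s) := by
      rw [linearCombination_eq_erase_add id s r]
      simp only [id]
      abel
    calc π (-f - s r • r) = π (linearCombination ℕ id (s.erase r)) := by
          rw [e, hm.map_add_of_mem_intLattice _ (isFeasible_iff.1 hs)]
      _ ≤ linearCombination ℕ π (s.erase r) := le_linearCombination_of_subadditive h0 hsub id _
  have hcopies : 1 ≤ π (-f - s r • r) + s r • V := by
    rcases Nat.eq_zero_or_pos (s r) with hzero | hpos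
    · simpa [hzero, h0] using hm.1.one_le_add_neg_sub 0
    · have h := haV (s r)
      rw [div_le_iff₀ (by exact_mod_cast hpos)] at h
      rw [nsmul_eq_mul]
      linarith
  linarith

lemma isMinimal_of_subadditive_of_symmetric (hnonneg : ∀ r, 0 ≤ π r) (h0 : π 0 = 0)
    (hper : ∀ r, ∀ z ∈ intLattice k, π (r + z) = π r)
    (hsub : ∀ a b, π (a + b) ≤ π a + π b) (hsym : ∀ r, π r + π (-f - r) = 1) :
    IsMinimal k f π := by
  have hvalid : IsValid k f π := by
    refine ⟨hnonneg, fun s hs => ?_⟩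
    rw [isFeasible_iff] at hs
    rw [sum_support_mul_eq_linearCombination]
    calc 1 = π (-f) := by simpa [h0] using (hsym 0).symm
      _ = π (linearCombination ℕ id s) := by rw [← hper (-f) _ hs, neg_add_cancel_left]
      _ ≤ linearCombination ℕ π s := le_linearCombination_of_subadditive h0 hsub id s
  refine ⟨hvalid, fun ⟨π', hv', hne, hle⟩ => hne (funext fun r => le_antisymm (hle r) ?_)⟩
  linarith [hv'.one_le_add_neg_sub r, hle (-f - r), hsym r]

end GroupRelaxation

theorem statement2_general (k : ℕ) (f : Vec k) (π : Vec k → ℝ)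
    (hnonneg : ∀ r, 0 ≤ π r) :
    IsMinimal k f π ↔
      (π 0 = 0 ∧
       (∀ (r : Vec k) (w : Fin k → ℤ), π (r + intVec k w) = π r) ∧
       (∀ a b : Vec k, π (a + b) ≤ π a + π b) ∧
       (∀ r : Vec k, π r + π (-f - r) = 1)) := by
  constructor
  · intro hm
    exact ⟨hm.map_zero, fun r w => hm.map_add_of_mem_intLattice r (intVec_mem_intLattice w),
      hm.map_add_le, hm.add_neg_sub_eq_one⟩
  · rintro ⟨h0, hper, hsub, hsym⟩
    refine isMinimal_of_subadditive_of_symmetric hnonneg h0 ?_ hsub hsym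
    rintro r _ ⟨w, rfl⟩
    exact hper r w

/-- Gomory–Johnson characterization of minimal valid functions. -/
theorem statement2 (k : ℕ) (hk : 1 ≤ k) (f : Vec k) (π : Vec k → ℝ)
    (hnonneg : ∀ r, 0 ≤ π r) :
    IsMinimal k f π ↔
      (π 0 = 0 ∧
       (∀ (r : Vec k) (w : Fin k → ℤ), π (r + intVec k w) = π r) ∧
       (∀ a b : Vec k, π (a + b) ≤ π a + π b) ∧
       (∀ r : Vec k, π r + π (-f - r) = 1)) :=
  statement2_general k f π hnonneg
end
end

section
/- Let k ≥ 1 and let r^1, …, r^{k+1} ∈ ℝ^k be such that cone(r^1, …, r^{k+1}) = ℝ^k. Then for every index i ∈ {1, …, k+1}, the family (r^j)_{j ≠ i} is linearly independent (hence every proper subset of {r^1, …, r^{k+1}} is linearly independent). -/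
open scoped BigOperators

noncomputable section

section PositiveSpanning

variable {𝕜 E ι : Type*} [Field 𝕜] [LinearOrder 𝕜] [IsStrictOrderedRing 𝕜]
  [AddCommGroup E] [Module 𝕜 E] [Fintype ι] [DecidableEq ι] {v : ι → E}

theorem span_ne_eq_top_of_forall_eq_sum_nonneg_smul
    (hv : ∀ x, ∃ c : ι → 𝕜, (∀ j, 0 ≤ c j) ∧ x = ∑ j, c j • v j) (i : ι) :
    Submodule.span 𝕜 (Set.range fun j : {j // j ≠ i} => v j) = ⊤ := by
  set W := Submodule.span 𝕜 (Set.range fun j : {j // j ≠ i} => v j)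
  have mem_of_ne : ∀ j, j ≠ i → v j ∈ W := fun j hj => Submodule.subset_span ⟨⟨j, hj⟩, rfl⟩
  -- Writing `-v i = ∑ c j • v j` with `c ≥ 0` puts `(1 + c i) • v i` in `W`, and `1 + c i > 0`.
  have mem_self : v i ∈ W := by
    obtain ⟨c, hc, hneg⟩ := hv (-v i)
    rw [← Finset.add_sum_erase _ _ (Finset.mem_univ i)] at hneg
    have hpos : (1 + c i : 𝕜) ≠ 0 := by linarith [hc i]
    refine (W.smul_mem_iff hpos).mp ?_
    have hsmul : (1 + c i) • v i = -∑ j ∈ Finset.univ.erase i, c j • v j := by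
      rw [add_smul, one_smul, eq_neg_iff_add_eq_zero, add_assoc, ← hneg, add_neg_cancel]
    rw [hsmul]
    exact W.neg_mem <| W.sum_mem fun j hj =>
      W.smul_mem _ (mem_of_ne j (Finset.ne_of_mem_erase hj))
  refine eq_top_iff.mpr fun x _ => ?_
  obtain ⟨c, -, rfl⟩ := hv x
  refine W.sum_mem fun j _ => W.smul_mem _ ?_
  by_cases hj : j = i
  · exact hj ▸ mem_self
  · exact mem_of_ne j hj

theorem linearIndependent_ne_of_forall_eq_sum_nonneg_smul [FiniteDimensional 𝕜 E]
    (hcard : Fintype.card ι = Module.finrank 𝕜 E + 1)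
    (hv : ∀ x, ∃ c : ι → 𝕜, (∀ j, 0 ≤ c j) ∧ x = ∑ j, c j • v j) (i : ι) :
    LinearIndependent 𝕜 fun j : {j // j ≠ i} => v j :=
  linearIndependent_of_top_le_span_of_card_eq_finrank
    (span_ne_eq_top_of_forall_eq_sum_nonneg_smul hv i).ge
    (by rw [Fintype.card_subtype_compl, Fintype.card_subtype_eq, hcard, Nat.add_sub_cancel])

end PositiveSpanning

theorem statement6_general (k : ℕ) (r : Fin (k + 1) → Vec k)
    (h : coneOf r = Set.univ) (i : Fin (k + 1)) :
    LinearIndependent ℝ (fun j : {j : Fin (k + 1) // j ≠ i} => r j) := by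
  have hcone : ∀ x, x ∈ coneOf r := fun x => h ▸ Set.mem_univ x
  exact linearIndependent_ne_of_forall_eq_sum_nonneg_smul (by simp) hcone i

/-- If k+1 vectors positively span `ℝ^k`, every proper subfamily is linearly
independent. -/
theorem statement6 (k : ℕ) (hk : 1 ≤ k) (r : Fin (k + 1) → Vec k)
    (h : coneOf r = Set.univ) (i : Fin (k + 1)) :
    LinearIndependent ℝ (fun j : {j : Fin (k + 1) // j ≠ i} => r j) :=
  statement6_general k r h i
end
end

section
/- Let k ≥ 1 and let {a^1, …, a^{k+1}} and {b^1, …, b^{k+1}} be two sets of k+1 vectors in ℝ^k. Suppose cone(a^1, …, a^{k+1}) = ℝ^k and a^i · b^j < 0 for all i ≠ j. Then cone(b^1, …, b^{k+1}) = ℝ^k. -/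
open scoped BigOperators

noncomputable section

/-!
Since `cone(a) = ℝ^k`, the `a^i` admit a relation `∑ λ_i a^i = 0` with all `λ_i > 0`, and no
nonzero `y` has `a^i · y ≤ 0` for all `i`.

The `b^j` span `ℝ^k`: if `y · b^j ≥ 0` for all `j`, write `y = ∑ ν_i a^i` and subtract a
multiple of `λ` so that `ν ≥ 0` and some `ν_{i₀}` vanishes; then
`y · b^{i₀} = ∑_{i ≠ i₀} ν_i a^i · b^{i₀}` is a nonnegative sum of nonpositive terms, so `ν = 0`.

Being `k + 1` vectors in `ℝ^k`, the `b^j` satisfy a nontrivial relation `∑ g_j b^j = 0`.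
Pairing with `a^i`, the signs off the diagonal give `a^i · ∑ |g_j| b^j ≤ 0` for every `i`, so
`∑ |g_j| b^j = 0`, and the same pairing shows that no `g_j` vanishes. A spanning family with a
strictly positive relation generates `ℝ^k` as a cone.
-/

open scoped RealInnerProductSpace

lemma eq_zero_of_sum_mul_nonneg {ι : Type*} [Fintype ι] {w c : ι → ℝ} {i₀ : ι}
    (hw : ∀ i, 0 ≤ w i) (hw₀ : w i₀ = 0) (hc : ∀ i, i ≠ i₀ → c i < 0)
    (hsum : 0 ≤ ∑ i, w i * c i) : w = 0 := by
  have hterm : ∀ i ∈ Finset.univ, w i * c i ≤ 0 := fun i _ => by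
    by_cases hi : i = i₀
    · simp [hi, hw₀]
    · exact mul_nonpos_of_nonneg_of_nonpos (hw i) (hc i hi).le
  have hzero := (Finset.sum_eq_zero_iff_of_nonpos hterm).mp
    (le_antisymm (Finset.sum_nonpos hterm) hsum)
  funext i
  by_cases hi : i = i₀
  · rw [hi, hw₀, Pi.zero_apply]
  · simpa [(hc i hi).ne] using hzero i (Finset.mem_univ i)

section Module

variable {ι M : Type*} [Fintype ι] [AddCommGroup M] [Module ℝ M]

lemma exists_nonneg_repr_with_zero_coeff [Nonempty ι] {a : ι → M} {lam μ : ι → ℝ}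
    (hlam : ∀ i, 0 < lam i) (hrel : ∑ i, lam i • a i = 0) :
    ∃ ν : ι → ℝ, ∃ i₀, (∀ i, 0 ≤ ν i) ∧ ν i₀ = 0 ∧ ∑ i, ν i • a i = ∑ i, μ i • a i := by
  obtain ⟨i₀, hmin⟩ := Finite.exists_min fun i => μ i / lam i
  set t := μ i₀ / lam i₀
  refine ⟨fun i => μ i - t * lam i, i₀, fun i => ?_, ?_, ?_⟩
  · have := (le_div_iff₀ (hlam i)).mp (hmin i)
    simp only
    linarith
  · simp [t, div_mul_cancel₀ _ (hlam i₀).ne']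
  · simp only [sub_smul, Finset.sum_sub_distrib, mul_smul, ← Finset.smul_sum, hrel, smul_zero,
      sub_zero]

end Module

section InnerProductSpace

variable {ι E : Type*} [Fintype ι] [NormedAddCommGroup E] [InnerProductSpace ℝ E]

lemma inner_sum_abs_smul_nonpos {u : E} {b : ι → E} {g : ι → ℝ} {i : ι}
    (hg : ∑ j, g j • b j = 0) (hu : ∀ j, j ≠ i → ⟪u, b j⟫ ≤ 0) :
    ⟪u, ∑ j, |g j| • b j⟫ ≤ 0 := by
  obtain ⟨s, hs, hsi⟩ : ∃ s : ℝ, |s| ≤ 1 ∧ s * g i = |g i| := by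
    rcases le_total 0 (g i) with h | h
    · exact ⟨1, by simp, by simp [abs_of_nonneg h]⟩
    · exact ⟨-1, by simp, by simp [abs_of_nonpos h]⟩
  have hsg : ∀ j, s * g j ≤ |g j| := fun j =>
    (le_abs_self _).trans (by rw [abs_mul]; exact mul_le_of_le_one_left (abs_nonneg _) hs)
  calc ⟪u, ∑ j, |g j| • b j⟫ = ⟪u, ∑ j, |g j| • b j⟫ - s * ⟪u, ∑ j, g j • b j⟫ := by
        rw [hg, inner_zero_right, mul_zero, sub_zero]
    _ = ∑ j, (|g j| - s * g j) * ⟪u, b j⟫ := by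
        simp only [inner_sum, real_inner_smul_right, Finset.mul_sum, ← Finset.sum_sub_distrib]
        exact Finset.sum_congr rfl fun j _ => by ring
    _ ≤ 0 := Finset.sum_nonpos fun j _ => by
        by_cases hj : j = i
        · simp [hj, hsi]
        · exact mul_nonpos_of_nonneg_of_nonpos (sub_nonneg.mpr (hsg j)) (hu j hj)

end InnerProductSpace

variable {k m : ℕ} {a b : Fin m → Vec k}

lemma coneOf_eq_univ_of_span_eq_top {v : Fin m → Vec k} {c : Fin m → ℝ}
    (hspan : Submodule.span ℝ (Set.range v) = ⊤) (hc : ∀ j, 0 < c j)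
    (hrel : ∑ j, c j • v j = 0) : coneOf v = Set.univ := by
  refine Set.eq_univ_of_forall fun x => ?_
  have hx : x ∈ Submodule.span ℝ (Set.range v) := hspan ▸ Submodule.mem_top
  obtain ⟨d, hd⟩ := (Submodule.mem_span_range_iff_exists_fun ℝ).mp hx
  obtain ⟨T, hT⟩ := Finite.exists_le fun j => -d j / c j
  refine ⟨fun j => d j + T * c j, fun j => ?_, ?_⟩
  · have := (div_le_iff₀ (hc j)).mp (hT j)
    simp only
    linarith
  · simp only [add_smul, Finset.sum_add_distrib, mul_smul, ← Finset.smul_sum, hrel, smul_zero,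
      add_zero, hd]

lemma eq_zero_of_forall_inner_nonpos (ha : coneOf a = Set.univ) {y : Vec k}
    (hy : ∀ i, ⟪a i, y⟫ ≤ 0) : y = 0 := by
  obtain ⟨μ, hμ, hyμ⟩ : y ∈ coneOf a := ha ▸ Set.mem_univ y
  refine real_inner_self_nonpos.mp ?_
  nth_rewrite 1 [hyμ]
  rw [sum_inner]
  exact Finset.sum_nonpos fun i _ => by
    rw [real_inner_smul_left]
    exact mul_nonpos_of_nonneg_of_nonpos (hμ i) (hy i)

lemma exists_pos_relation_of_coneOf_eq_univ (ha : coneOf a = Set.univ) :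
    ∃ lam : Fin m → ℝ, (∀ i, 0 < lam i) ∧ ∑ i, lam i • a i = 0 := by
  obtain ⟨ν, hν, hνa⟩ : -∑ i, a i ∈ coneOf a := ha ▸ Set.mem_univ _
  refine ⟨fun i => 1 + ν i, fun i => by linarith [hν i], ?_⟩
  simp only [add_smul, one_smul, Finset.sum_add_distrib, ← hνa, add_neg_cancel]

lemma eq_zero_of_forall_inner_nonneg (ha : coneOf a = Set.univ)
    (hab : ∀ i j, i ≠ j → ⟪a i, b j⟫ < 0) {y : Vec k} (hy : ∀ j, 0 ≤ ⟪y, b j⟫) : y = 0 := by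
  obtain ⟨μ, -, hyμ⟩ : y ∈ coneOf a := ha ▸ Set.mem_univ y
  rcases isEmpty_or_nonempty (Fin m) with hm | hm
  · simp [hyμ]
  obtain ⟨lam, hlam, hrel⟩ := exists_pos_relation_of_coneOf_eq_univ ha
  obtain ⟨ν, i₀, hν, hν₀, hνa⟩ := exists_nonneg_repr_with_zero_coeff (μ := μ) hlam hrel
  have hν_zero : ν = 0 := by
    refine eq_zero_of_sum_mul_nonneg hν hν₀ (fun i hi => hab i i₀ hi) ?_
    simpa [hyμ, ← hνa, sum_inner, real_inner_smul_left] using hy i₀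
  simp [hyμ, ← hνa, hν_zero]

lemma span_range_eq_top_of_inner_neg (ha : coneOf a = Set.univ)
    (hab : ∀ i j, i ≠ j → ⟪a i, b j⟫ < 0) : Submodule.span ℝ (Set.range b) = ⊤ := by
  rw [← Submodule.orthogonal_eq_bot_iff, Submodule.eq_bot_iff]
  intro y hy
  refine eq_zero_of_forall_inner_nonneg ha hab fun j => ?_
  rw [real_inner_comm]
  exact (Submodule.inner_right_of_mem_orthogonal
    (Submodule.subset_span (Set.mem_range_self j)) hy).ge

lemma sum_abs_smul_eq_zero_of_inner_nonpos (ha : coneOf a = Set.univ)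
    (hab : ∀ i j, i ≠ j → ⟪a i, b j⟫ ≤ 0) {g : Fin m → ℝ} (hg : ∑ j, g j • b j = 0) :
    ∑ j, |g j| • b j = 0 :=
  eq_zero_of_forall_inner_nonpos ha fun i =>
    inner_sum_abs_smul_nonpos hg fun j hj => hab i j (Ne.symm hj)

lemma forall_ne_zero_of_inner_neg (ha : coneOf a = Set.univ)
    (hab : ∀ i j, i ≠ j → ⟪a i, b j⟫ < 0) {g : Fin m → ℝ} (hg : ∑ j, g j • b j = 0)
    (hg₀ : ∃ j, g j ≠ 0) (i : Fin m) : g i ≠ 0 := by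
  intro hgi
  have hrel_abs := sum_abs_smul_eq_zero_of_inner_nonpos ha (fun i j h => (hab i j h).le) hg
  have habs_zero : (fun j => |g j|) = 0 := by
    refine eq_zero_of_sum_mul_nonneg (fun j => abs_nonneg (g j)) (by simp [hgi])
      (fun j hj => hab i j (Ne.symm hj)) ?_
    have hsum : ∑ j, |g j| * ⟪a i, b j⟫ = 0 := by
      simpa [inner_sum, real_inner_smul_right] using congrArg (⟪a i, ·⟫) hrel_abs
    exact hsum.ge
  obtain ⟨j, hj⟩ := hg₀
  exact hj (abs_eq_zero.mp (congrFun habs_zero j))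

theorem statement7_general (k : ℕ) (a b : Fin (k + 1) → Vec k)
    (ha : coneOf a = Set.univ)
    (hab : ∀ i j, i ≠ j → (inner ℝ (a i) (b j) : ℝ) < 0) :
    coneOf b = Set.univ := by
  have hdep : ¬ LinearIndependent ℝ b := fun h => by simpa using h.fintype_card_le_finrank
  obtain ⟨g, hg, hg₀⟩ := Fintype.not_linearIndependent_iff.mp hdep
  exact coneOf_eq_univ_of_span_eq_top (span_range_eq_top_of_inner_neg ha hab)
    (fun j => abs_pos.mpr (forall_ne_zero_of_inner_neg ha hab hg hg₀ j))
    (sum_abs_smul_eq_zero_of_inner_nonpos ha (fun i j h => (hab i j h).le) hg)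

/-- If `cone(a) = ℝ^k` and `a_i · b_j < 0` for `i ≠ j`, then `cone(b) = ℝ^k`. -/
theorem statement7 (k : ℕ) (hk : 1 ≤ k) (a b : Fin (k + 1) → Vec k)
    (ha : coneOf a = Set.univ)
    (hab : ∀ i j, i ≠ j → (inner ℝ (a i) (b j) : ℝ) < 0) :
    coneOf b = Set.univ :=
  statement7_general k a b ha hab
end
end

section
/- Let y ∈ ℝ^k be any point and r ∈ ℝ^k \ {0} any direction. Then for every ε > 0 and every λ̄ ≥ 0, there exists w ∈ ℤ^k such that the point y + w is at Euclidean distance less than ε from the half line {y + λr : λ ≥ λ̄}. -/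
open scoped BigOperators

noncomputable section

/-! By compactness of the unit cube, the fractional parts of the multiples `n • β` have two
members, with indices at least `N` apart, closer than `δ`; their difference is a multiple
`n • β` with `n ≥ N` lying within `δ` of a lattice point. For `β = r` and `n ≥ λ̄` this puts
the lattice translate `y + w` near the point `y + n • r` of the half line. -/

theorem IsCompact.exists_dist_lt_of_add_le {X : Type*} [PseudoMetricSpace X] {K : Set X}
    (hK : IsCompact K) {u : ℕ → X} (hu : ∀ n, u n ∈ K) {δ : ℝ} (hδ : 0 < δ) (N : ℕ) :
    ∃ a b, a + N ≤ b ∧ dist (u b) (u a) < δ := by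
  obtain ⟨_, -, φ, hφ, hlim⟩ := hK.tendsto_subseq hu
  obtain ⟨M, hM⟩ := Metric.cauchySeq_iff'.mp hlim.cauchySeq δ hδ
  refine ⟨φ M, φ (N + M), ?_, hM (N + M) (Nat.le_add_left M N)⟩
  simpa [add_comm] using hφ.add_le_nat N M

theorem isCompact_toLp_unitCube (k : ℕ) :
    IsCompact (WithLp.toLp 2 '' Set.univ.pi fun _ : Fin k => Set.Icc (0 : ℝ) 1) :=
  (isCompact_univ_pi fun _ => isCompact_Icc).image (PiLp.continuous_toLp 2 _)

theorem exists_nat_smul_dist_intVec_lt (k : ℕ) (β : Vec k) {δ : ℝ} (hδ : 0 < δ) (N : ℕ) :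
    ∃ n : ℕ, N ≤ n ∧ ∃ w : Fin k → ℤ, ‖(n : ℝ) • β - intVec k w‖ < δ := by
  set u : ℕ → Vec k := fun n => WithLp.toLp 2 fun i => Int.fract ((n : ℝ) * β i)
  have hu : ∀ n, u n ∈ WithLp.toLp 2 '' Set.univ.pi fun _ : Fin k => Set.Icc (0 : ℝ) 1 :=
    fun n => ⟨_, fun i _ => ⟨Int.fract_nonneg _, (Int.fract_lt_one _).le⟩, rfl⟩
  obtain ⟨a, b, hab, hdist⟩ := (isCompact_toLp_unitCube k).exists_dist_lt_of_add_le hu hδ N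
  refine ⟨b - a, by omega, fun i => ⌊(b : ℝ) * β i⌋ - ⌊(a : ℝ) * β i⌋, ?_⟩
  have hdiff : ((b - a : ℕ) : ℝ) • β - intVec k (fun i => ⌊(b : ℝ) * β i⌋ - ⌊(a : ℝ) * β i⌋) =
      u b - u a := by
    ext i
    simp only [u, intVec, PiLp.sub_apply, PiLp.smul_apply, smul_eq_mul, Int.fract,
      Nat.cast_sub (show a ≤ b by omega)]
    push_cast
    ring
  rwa [hdiff, ← dist_eq_norm]

theorem statement10_general (k : ℕ) (y r : Vec k)
    (ε : ℝ) (hε : 0 < ε) (lb : ℝ) :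
    ∃ w : Fin k → ℤ,
      Metric.infDist (y + intVec k w)
        {z : Vec k | ∃ lam : ℝ, lb ≤ lam ∧ z = y + lam • r} < ε := by
  obtain ⟨n, hn, w, hw⟩ := exists_nat_smul_dist_intVec_lt k r hε ⌈lb⌉₊
  have hmem : y + (n : ℝ) • r ∈ {z : Vec k | ∃ lam : ℝ, lb ≤ lam ∧ z = y + lam • r} :=
    ⟨n, (Nat.le_ceil lb).trans (by exact_mod_cast hn), rfl⟩
  refine ⟨w, (Metric.infDist_le_dist_of_mem hmem).trans_lt ?_⟩
  rwa [dist_add_left, dist_comm, dist_eq_norm]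

/-- Dirichlet-type approximation: some lattice translate of `y` lies within `ε` of the
half line `{y + λ r : λ ≥ λ̄}`. -/
theorem statement10 (k : ℕ) (y r : Vec k) (hr : r ≠ 0)
    (ε : ℝ) (hε : 0 < ε) (lb : ℝ) (hlb : 0 ≤ lb) :
    ∃ w : Fin k → ℤ,
      Metric.infDist (y + intVec k w)
        {z : Vec k | ∃ lam : ℝ, lb ≤ lam ∧ z = y + lam • r} < ε :=
  statement10_general k y r ε hε lb
end
end

section
/- Let k ≥ 1 and let θ : ℝ^k → ℝ be nonnegative, Lipschitz continuous, subadditive, and periodic with respect to the lattice ℤ^k. Suppose there exist r ∈ ℝ^k \ {0} and λ̄ > 0 such that θ(λr) = 0 for all 0 ≤ λ ≤ λ̄. Then θ is not genuinely k-dimensional, i.e., there exist a function φ : ℝ^{k−1} → ℝ and a linear map T : ℝ^k → ℝ^{k−1} such that θ = φ ∘ T. -/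
open scoped BigOperators

noncomputable section

/-!
Nonnegativity and subadditivity make the zero set of `θ` closed under addition, so `θ` vanishes
on the whole ray `ℝ≥0 • r`. For the opposite ray, some multiple `n • v` (`n ≥ 1`) of any `v`
lies close to `ℤ^k`, so `-v = (n - 1) • v - n • v` is, modulo `ℤ^k`, a point of the ray plus a
small vector; continuity at `0` then forces `θ (-v) = 0`. Hence `θ (x + c • r) = θ x` for all
`c`, and `θ` factors through the `(k - 1)`-dimensional quotient by `ℝ ∙ r`.
-/

open Module

section Subadditive

variable {E : Type*} [AddCommGroup E] {θ : E → ℝ}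

theorem apply_nsmul_le_of_subadditive (hsub : ∀ a b, θ (a + b) ≤ θ a + θ b) (x : E) {n : ℕ}
    (hn : 0 < n) : θ (n • x) ≤ n * θ x := by
  induction n, hn using Nat.le_induction with
  | base => simp
  | succ n _ ih =>
    rw [succ_nsmul]
    push_cast
    linarith [hsub (n • x) x]

theorem apply_add_eq_of_subadditive (hsub : ∀ a b, θ (a + b) ≤ θ a + θ b) {y : E}
    (hy : θ y = 0) (hny : θ (-y) = 0) (x : E) : θ (x + y) = θ x := by
  have h := hsub (x + y) (-y)
  rw [add_neg_cancel_right] at h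
  linarith [hsub x y]

theorem apply_smul_eq_zero_of_nonneg [Module ℝ E] (hnonneg : ∀ x, 0 ≤ θ x)
    (hsub : ∀ a b, θ (a + b) ≤ θ a + θ b) {r : E} {lb : ℝ} (hlb : 0 < lb)
    (hzero : ∀ lam : ℝ, 0 ≤ lam → lam ≤ lb → θ (lam • r) = 0) {t : ℝ} (ht : 0 ≤ t) :
    θ (t • r) = 0 := by
  obtain ⟨n, hn⟩ := exists_nat_gt (t / lb)
  have hn₀ : (0 : ℝ) < n := (div_nonneg ht hlb.le).trans_lt hn
  have hsplit : t • r = n • ((t / n) • r) := by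
    rw [← Nat.cast_smul_eq_nsmul ℝ, smul_smul, mul_div_cancel₀ t hn₀.ne']
  have hsmall : θ ((t / n) • r) = 0 :=
    hzero _ (div_nonneg ht hn₀.le) ((div_le_iff₀ hn₀).mpr (by
      rw [div_lt_iff₀ hlb] at hn; linarith))
  have := apply_nsmul_le_of_subadditive hsub ((t / n) • r) (Nat.cast_pos.mp hn₀)
  rw [hsmall, mul_zero, ← hsplit] at this
  exact le_antisymm this (hnonneg _)

end Subadditive

theorem exists_nsmul_sub_intVec_norm_lt {k : ℕ} (v : Vec k) {ε : ℝ} (hε : 0 < ε) :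
    ∃ n : ℕ, 0 < n ∧ ∃ w : Fin k → ℤ, ‖n • v - intVec k w‖ < ε := by
  set fract : ℕ → Vec k := fun n => WithLp.toLp 2 fun i => Int.fract ((n • v) i)
  have hcube : IsCompact (WithLp.toLp 2 '' Set.univ.pi fun _ : Fin k => Set.Icc (0 : ℝ) 1) :=
    (isCompact_univ_pi fun _ => isCompact_Icc).image (PiLp.continuous_toLp 2 _)
  obtain ⟨_, -, φ, hφ, hlim⟩ := hcube.tendsto_subseq (x := fract) fun n =>
    ⟨_, fun i _ => ⟨Int.fract_nonneg _, (Int.fract_lt_one _).le⟩, rfl⟩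
  obtain ⟨N, hN⟩ := Metric.cauchySeq_iff.mp hlim.cauchySeq ε hε
  have hlt : φ N < φ (N + 1) := hφ N.lt_succ_self
  refine ⟨φ (N + 1) - φ N, Nat.sub_pos_of_lt hlt,
    fun i => ⌊(φ (N + 1) • v) i⌋ - ⌊(φ N • v) i⌋, ?_⟩
  convert hN (N + 1) N.le_succ N le_rfl using 1
  rw [dist_eq_norm]
  congr 1
  ext i
  simp only [sub_nsmul v hlt.le, intVec, PiLp.smul_apply, nsmul_eq_mul, Int.cast_sub,
    PiLp.sub_apply, PiLp.add_apply, PiLp.neg_apply, Function.comp_apply, fract]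
  unfold Int.fract
  ring

theorem apply_neg_eq_zero_of_periodic {k : ℕ} {θ : Vec k → ℝ} (hnonneg : ∀ x, 0 ≤ θ x)
    (hsub : ∀ a b, θ (a + b) ≤ θ a + θ b) (hcont : ContinuousAt θ 0)
    (hper : ∀ (x : Vec k) (w : Fin k → ℤ), θ (x + intVec k w) = θ x) {v : Vec k}
    (hv : ∀ n : ℕ, θ (n • v) = 0) : θ (-v) = 0 := by
  have hθ₀ : θ 0 = 0 := by simpa using hv 0
  refine le_antisymm (le_of_forall_pos_lt_add fun ε hε => ?_) (hnonneg _)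
  obtain ⟨δ, hδ, hsmall⟩ := Metric.continuousAt_iff.mp hcont ε hε
  obtain ⟨n, hn, w, hnw⟩ := exists_nsmul_sub_intVec_norm_lt v hδ
  obtain ⟨m, rfl⟩ := Nat.exists_eq_add_one_of_ne_zero hn.ne'
  calc θ (-v) = θ (m • v + -((m + 1) • v)) := by rw [succ_nsmul]; abel_nf
    _ ≤ θ (m • v) + θ (-((m + 1) • v)) := hsub _ _
    _ = θ (-((m + 1) • v - intVec k w)) := by
      rw [hv, zero_add, ← hper _ w]
      congr 1
      abel
    _ < 0 + ε := by
      have h := hsmall (show dist (-((m + 1) • v - intVec k w)) 0 < δ by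
        rwa [dist_zero_right, norm_neg])
      rw [hθ₀, Real.dist_eq, sub_zero, abs_lt] at h
      linarith [h.2]

theorem exists_eq_comp_linearMap_of_forall_add_smul_eq {K E F : Type*} [Field K]
    [AddCommGroup E] [Module K E] [FiniteDimensional K E]
    [AddCommGroup F] [Module K F] [FiniteDimensional K F]
    (hF : finrank K F = finrank K E - 1) {θ : E → ℝ} {r : E} (hr : r ≠ 0)
    (hθ : ∀ x (c : K), θ (x + c • r) = θ x) :
    ∃ (φ : F → ℝ) (T : E →ₗ[K] F), θ = φ ∘ T := by
  have hQ : finrank K (E ⧸ K ∙ r) = finrank K F := by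
    have := (K ∙ r).finrank_quotient_add_finrank
    rw [finrank_span_singleton hr] at this
    omega
  set T : E →ₗ[K] F := (LinearEquiv.ofFinrankEq _ _ hQ).toLinearMap ∘ₗ (K ∙ r).mkQ
  have hT : Function.Surjective T :=
    (LinearEquiv.surjective _).comp (Submodule.mkQ_surjective _)
  refine ⟨θ ∘ Function.surjInv hT, T, funext fun x => ?_⟩
  have hker : Function.surjInv hT (T x) - x ∈ K ∙ r :=
    (Submodule.Quotient.eq _).mp ((LinearEquiv.injective _) (Function.surjInv_eq hT (T x)))
  obtain ⟨c, hc⟩ := Submodule.mem_span_singleton.mp hker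
  simp only [Function.comp_apply, ← hθ x c, hc, add_sub_cancel]

theorem statement11_general (k : ℕ) (θ : Vec k → ℝ)
    (hnonneg : ∀ x, 0 ≤ θ x)
    (hlip : ∃ K : ℝ, 0 ≤ K ∧ ∀ x y : Vec k, |θ x - θ y| ≤ K * ‖x - y‖)
    (hsub : ∀ a b : Vec k, θ (a + b) ≤ θ a + θ b)
    (hper : ∀ (x : Vec k) (w : Fin k → ℤ), θ (x + intVec k w) = θ x)
    (r : Vec k) (hr : r ≠ 0) (lb : ℝ) (hlb : 0 < lb)
    (hzero : ∀ lam : ℝ, 0 ≤ lam → lam ≤ lb → θ (lam • r) = 0) :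
    ∃ (φ : Vec (k - 1) → ℝ) (T : Vec k →ₗ[ℝ] Vec (k - 1)), θ = φ ∘ T := by
  obtain ⟨K, -, hlip⟩ := hlip
  have hcont : ContinuousAt θ 0 :=
    (LipschitzWith.of_dist_le' (K := K) fun x y => by
      simpa [Real.dist_eq, dist_eq_norm] using hlip x y).continuous.continuousAt
  have hray : ∀ t : ℝ, 0 ≤ t → θ (t • r) = 0 := fun t ht =>
    apply_smul_eq_zero_of_nonneg hnonneg hsub hlb hzero ht
  have hline : ∀ c : ℝ, θ (c • r) = 0 := by
    intro c
    rcases le_total 0 c with hc | hc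
    · exact hray c hc
    · rw [← neg_neg c, neg_smul]
      refine apply_neg_eq_zero_of_periodic hnonneg hsub hcont hper fun n => ?_
      rw [← Nat.cast_smul_eq_nsmul ℝ, smul_smul]
      exact hray _ (mul_nonneg n.cast_nonneg (neg_nonneg.mpr hc))
  refine exists_eq_comp_linearMap_of_forall_add_smul_eq (by simp) hr fun x c =>
    apply_add_eq_of_subadditive hsub (hline c) ?_ x
  rw [← neg_smul]
  exact hline _

/-- A nonnegative, Lipschitz, subadditive, ℤ^k-periodic function vanishing on a small
segment from the origin is not genuinely k-dimensional. -/
theorem statement11 (k : ℕ) (hk : 1 ≤ k) (θ : Vec k → ℝ)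
    (hnonneg : ∀ x, 0 ≤ θ x)
    (hlip : ∃ K : ℝ, 0 ≤ K ∧ ∀ x y : Vec k, |θ x - θ y| ≤ K * ‖x - y‖)
    (hsub : ∀ a b : Vec k, θ (a + b) ≤ θ a + θ b)
    (hper : ∀ (x : Vec k) (w : Fin k → ℤ), θ (x + intVec k w) = θ x)
    (r : Vec k) (hr : r ≠ 0) (lb : ℝ) (hlb : 0 < lb)
    (hzero : ∀ lam : ℝ, 0 ≤ lam → lam ≤ lb → θ (lam • r) = 0) :
    ∃ (φ : Vec (k - 1) → ℝ) (T : Vec k →ₗ[ℝ] Vec (k - 1)), θ = φ ∘ T :=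
  statement11_general k θ hnonneg hlip hsub hper r hr lb hlb hzero
end
end

section
/- Let k ≥ 1 and let θ : ℝ^k → ℝ be nonnegative, piecewise linear with a locally finite cell complex P, subadditive, periodic with respect to ℤ^k, genuinely k-dimensional with at most k+1 slopes, and suppose θ(0) = 0. Then θ has exactly k+1 slopes; moreover, if g^1, …, g^{k+1} is the gradient set of θ, then cone(g^1, …, g^{k+1}) = ℝ^k, and for every i = 1, …, k+1 there exists a maximal cell P of the subcomplex P_i (the maximal cells with gradient g^i) with 0 ∈ P. -/
open scoped BigOperators

noncomputable section

/-!
Near the origin `θ` agrees with one of the linear forms `⟪g, ·⟫`, `g` ranging over the set `G₀`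
of gradients of the maximal cells through `0`; blowing up by subadditivity gives
`θ ≤ max_{g ∈ G₀} ⟪g, ·⟫` everywhere, so `θ` is Lipschitz. If some `u ≠ 0` had `⟪g, u⟫ ≤ 0` for
all `g ∈ G₀`, then `θ` would be nonincreasing along `u`; as the multiples of `u` return arbitrarily
close to `ℤ^k`, periodicity and continuity make `θ` constant along `u`, so `θ` factors through
`ℝ^k ⧸ ℝu`. Hence `G₀` positively spans `ℝ^k`, which takes at least `k + 1` vectors, and with at
most `k + 1` slopes `G₀` is the whole gradient set.
-/

open scoped RealInnerProductSpace

lemma IsFace.finrank_vectorSpan_lt {k : ℕ} {F P : Set (Vec k)} (h : IsFace F P)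
    (hF : F.Nonempty) (hne : F ≠ P) :
    Module.finrank ℝ (vectorSpan ℝ F) < Module.finrank ℝ (vectorSpan ℝ P) := by
  obtain ⟨a, b, -, rfl⟩ := h
  obtain ⟨p, hpP, hpb⟩ := hF
  obtain ⟨q, hqP, hqb⟩ : ∃ q ∈ P, ⟪a, q⟫ ≠ b := by
    by_contra! hall
    exact hne (Set.ext fun x => ⟨fun hx => hx.1, fun hx => ⟨hx, hall x hx⟩⟩)
  have hker : vectorSpan ℝ {x | x ∈ P ∧ ⟪a, x⟫ = b} ≤ LinearMap.ker (innerₛₗ ℝ a) := by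
    rw [vectorSpan_def, Submodule.span_le]
    rintro _ ⟨x, hx, y, hy, rfl⟩
    simp [inner_sub_right, hx.2, hy.2]
  refine Submodule.finrank_lt_finrank_of_lt
    (lt_of_le_of_ne (vectorSpan_mono ℝ (Set.sep_subset _ _)) fun heq => hqb ?_)
  have hqp := hker (heq ▸ vsub_mem_vectorSpan ℝ hqP hpP)
  simp only [LinearMap.mem_ker, innerₛₗ_apply_apply, vsub_eq_sub, inner_sub_right, hpb] at hqp
  linarith

namespace PolyhedralComplex

variable {k : ℕ} {PC : PolyhedralComplex k}

lemma exists_maximalCell_superset (PC : PolyhedralComplex k) {P : Set (Vec k)}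
    (hP : P ∈ PC.cells) (hne : P.Nonempty) : ∃ R, IsMaximalCell PC R ∧ P ⊆ R := by
  obtain ⟨R, ⟨hR, hPR⟩, hmin⟩ :=
    (measure fun Q : Set (Vec k) => k - Module.finrank ℝ (vectorSpan ℝ Q)).wf.has_min
      {Q | Q ∈ PC.cells ∧ P ⊆ Q} ⟨P, hP, subset_rfl⟩
  refine ⟨R, ⟨hR, fun Q hQ hRQ => ?_⟩, hPR⟩
  by_contra hQR
  have hface := (PC.inter_face R hR Q hQ).2
  rw [Set.inter_eq_left.2 hRQ] at hface
  have hlt := hface.finrank_vectorSpan_lt (hne.mono hPR) (Ne.symm hQR)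
  have hle : Module.finrank ℝ (vectorSpan ℝ Q) ≤ k :=
    (Submodule.finrank_le _).trans finrank_euclideanSpace_fin.le
  exact hmin Q ⟨hQ, hPR.trans hRQ⟩ (show k - _ < k - _ by omega)

lemma Complete.exists_maximalCell_mem (h : PC.Complete) (x : Vec k) :
    ∃ R, IsMaximalCell PC R ∧ x ∈ R := by
  obtain ⟨P, hP, hxP⟩ : x ∈ ⋃₀ PC.cells := h ▸ Set.mem_univ x
  obtain ⟨R, hR, hPR⟩ := PC.exists_maximalCell_superset hP ⟨x, hxP⟩
  exact ⟨R, hR, hPR hxP⟩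

lemma LocFinite.exists_mem_of_inter_ball_nonempty (h : PC.LocFinite) (r : Vec k) :
    ∃ ε > 0, ∀ P ∈ PC.cells, (P ∩ Metric.ball r ε).Nonempty → r ∈ P := by
  obtain ⟨ε, hε, F, hF, hcells⟩ := h r
  refine ⟨ε, hε, fun P hP hne => ?_⟩
  have hS : P ∩ Metric.ball r ε ∈ {S : Set (Vec k) | ∃ C ∈ F.cells,
      S = ((fun x => x + r) '' C) ∩ Metric.ball r ε ∧ S.Nonempty} := hcells ▸ ⟨P, hP, rfl, hne⟩
  obtain ⟨C, hC, hPC, -⟩ := hS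
  obtain ⟨c, hc, -⟩ := (hPC ▸ hne).some_mem.1
  have h0 : (0 : Vec k) ∈ C := by simpa using hF.2 C hC c hc 0 le_rfl
  have hr : r ∈ P ∩ Metric.ball r ε := hPC ▸ ⟨⟨0, h0, zero_add r⟩, Metric.mem_ball_self hε⟩
  exact hr.1

end PolyhedralComplex

def gradSetAt {k : ℕ} (PC : PolyhedralComplex k) (grad : Set (Vec k) → Vec k) (r : Vec k) :
    Set (Vec k) :=
  {g | ∃ P : Set (Vec k), IsMaximalCell PC P ∧ grad P = g ∧ r ∈ P}

lemma IsPWLWith.exists_eq_inner_of_norm_lt {k : ℕ} {PC : PolyhedralComplex k}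
    {grad : Set (Vec k) → Vec k} {θ : Vec k → ℝ} (hpwl : IsPWLWith PC grad θ)
    (hlf : PC.LocFinite) (h0 : θ 0 = 0) :
    ∃ ε > 0, ∀ x : Vec k, ‖x‖ < ε → ∃ g ∈ gradSetAt PC grad 0, θ x = ⟪g, x⟫ := by
  obtain ⟨ε, hε, hmem⟩ := hlf.exists_mem_of_inter_ball_nonempty 0
  refine ⟨ε, hε, fun x hx => ?_⟩
  obtain ⟨P, hP, hxP⟩ := hpwl.2.1.exists_maximalCell_mem x
  have h0P : (0 : Vec k) ∈ P := hmem P hP.1 ⟨x, hxP, mem_ball_zero_iff.2 hx⟩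
  obtain ⟨δ, hδ⟩ := hpwl.2.2 P hP
  have hδ0 : δ = 0 := by simpa [h0] using (hδ 0 h0P).symm
  exact ⟨grad P, ⟨P, hP, rfl, h0P⟩, by rw [hδ x hxP, hδ0, add_zero]⟩

section Subadditive

variable {E : Type*}

lemma le_nsmul_mul_of_subadditive [AddMonoid E] {θ : E → ℝ}
    (hsub : ∀ a b, θ (a + b) ≤ θ a + θ b) (y : E) {n : ℕ} (hn : 1 ≤ n) :
    θ (n • y) ≤ n * θ y := by
  induction n, hn using Nat.le_induction with
  | base => simp
  | succ n _ ih =>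
    calc θ ((n + 1) • y) ≤ θ (n • y) + θ y := by rw [succ_nsmul]; exact hsub _ _
      _ ≤ n * θ y + θ y := by gcongr
      _ = (n + 1 : ℕ) * θ y := by push_cast; ring

lemma exists_le_inner_of_eq_inner_of_norm_lt [NormedAddCommGroup E] [InnerProductSpace ℝ E]
    {θ : E → ℝ} (hsub : ∀ a b, θ (a + b) ≤ θ a + θ b) {G : Set E} {ε : ℝ} (hε : 0 < ε)
    (hloc : ∀ x, ‖x‖ < ε → ∃ g ∈ G, θ x = ⟪g, x⟫) (x : E) : ∃ g ∈ G, θ x ≤ ⟪g, x⟫ := by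
  obtain ⟨n, hn⟩ := exists_nat_gt (‖x‖ / ε)
  have hn0 : (0 : ℝ) < n := (div_nonneg (norm_nonneg x) hε.le).trans_lt hn
  have hsmall : ‖(n : ℝ)⁻¹ • x‖ < ε := by
    rw [norm_smul, norm_inv, Real.norm_natCast, inv_mul_lt_iff₀ hn0]
    exact (div_lt_iff₀ hε).1 hn
  obtain ⟨g, hg, hθ⟩ := hloc _ hsmall
  refine ⟨g, hg, ?_⟩
  calc θ x = θ (n • ((n : ℝ)⁻¹ • x)) := by
        rw [← Nat.cast_smul_eq_nsmul ℝ, smul_smul, mul_inv_cancel₀ hn0.ne', one_smul]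
    _ ≤ n * θ ((n : ℝ)⁻¹ • x) :=
        le_nsmul_mul_of_subadditive hsub _ (Nat.cast_pos.1 hn0)
    _ = ⟪g, x⟫ := by rw [hθ, real_inner_smul_right, ← mul_assoc, mul_inv_cancel₀ hn0.ne', one_mul]

lemma lipschitzWith_of_subadditive [SeminormedAddCommGroup E] {θ : E → ℝ}
    (hsub : ∀ a b, θ (a + b) ≤ θ a + θ b) {M : ℝ} (hM : ∀ x, θ x ≤ M * ‖x‖) :
    LipschitzWith M.toNNReal θ :=
  LipschitzWith.of_le_add_mul' M fun x y =>
    calc θ x = θ (y + (x - y)) := by rw [add_sub_cancel]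
      _ ≤ θ y + θ (x - y) := hsub _ _
      _ ≤ θ y + M * dist x y := by rw [dist_eq_norm]; gcongr; exact hM _

end Subadditive

-- The points `fract (n s u)` lie in the compact unit cube, so two of them are `δ`-close.
lemma exists_smul_add_intVec_norm_lt {k : ℕ} (u : Vec k) {s δ : ℝ} (hs : 0 ≤ s) (hδ : 0 < δ) :
    ∃ t ≥ s, ∃ w : Fin k → ℤ, ‖t • u + intVec k w‖ < δ := by
  let a : ℕ → Vec k := fun n => WithLp.toLp 2 fun i => Int.fract (n * s * u i)
  have hcube : IsCompact (WithLp.toLp 2 '' Set.univ.pi fun _ : Fin k => Set.Icc (0 : ℝ) 1) :=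
    (isCompact_univ_pi fun _ => isCompact_Icc).image (PiLp.continuous_toLp 2 _)
  obtain ⟨_, -, φ, hφ, hlim⟩ := hcube.tendsto_subseq (x := a) fun n =>
    ⟨_, fun i _ => ⟨Int.fract_nonneg _, (Int.fract_lt_one _).le⟩, rfl⟩
  obtain ⟨N, hN⟩ := Metric.cauchySeq_iff.1 hlim.cauchySeq δ hδ
  have hlt : φ N < φ (N + 1) := hφ (Nat.lt_succ_self N)
  refine ⟨(φ (N + 1) - φ N : ℕ) * s, ?_, fun i => ⌊φ N * s * u i⌋ - ⌊φ (N + 1) * s * u i⌋, ?_⟩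
  · have : (1 : ℝ) ≤ (φ (N + 1) - φ N : ℕ) := by exact_mod_cast Nat.sub_pos_of_lt hlt
    nlinarith
  · have hdiff : ((φ (N + 1) - φ N : ℕ) * s) • u
        + intVec k (fun i => ⌊φ N * s * u i⌋ - ⌊φ (N + 1) * s * u i⌋)
        = a (φ (N + 1)) - a (φ N) := by
      ext i
      simp only [intVec, a, PiLp.add_apply, PiLp.sub_apply, PiLp.smul_apply, smul_eq_mul,
        Int.fract]
      push_cast [Nat.cast_sub hlt.le]
      ring
    rw [hdiff, ← dist_eq_norm]
    exact hN (N + 1) (Nat.le_succ N) N le_rfl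

lemma add_smul_eq_of_forall_add_smul_le {k : ℕ} {θ : Vec k → ℝ} (hcont : Continuous θ)
    (hper : ∀ (x : Vec k) (w : Fin k → ℤ), θ (x + intVec k w) = θ x) {u : Vec k}
    (hdec : ∀ (x : Vec k) (t : ℝ), 0 ≤ t → θ (x + t • u) ≤ θ x) (x : Vec k) (c : ℝ) :
    θ (x + c • u) = θ x := by
  have hinc : ∀ (y : Vec k) (s : ℝ), 0 ≤ s → θ y ≤ θ (y + s • u) := by
    intro y s hs
    refine le_of_forall_pos_lt_add fun η hη => ?_
    obtain ⟨δ, hδ, hnear⟩ := Metric.continuous_iff.1 hcont y η hη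
    obtain ⟨t, hts, w, hw⟩ := exists_smul_add_intVec_norm_lt u hs hδ
    have hclose := hnear (y + (t • u + intVec k w)) (by rwa [dist_eq_norm, add_sub_cancel_left])
    rw [Real.dist_eq, abs_lt] at hclose
    calc θ y < θ (y + (t • u + intVec k w)) + η := by linarith
      _ = θ (y + s • u + (t - s) • u) + η := by
        rw [← add_assoc, hper, add_assoc, ← add_smul, add_sub_cancel]
      _ ≤ θ (y + s • u) + η := by gcongr; exact hdec _ _ (sub_nonneg.2 hts)
  have hray : ∀ (y : Vec k) (s : ℝ), 0 ≤ s → θ (y + s • u) = θ y :=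
    fun y s hs => le_antisymm (hdec y s hs) (hinc y s hs)
  rcases le_total 0 c with hc | hc
  · exact hray x c hc
  · simpa [add_assoc, ← add_smul] using (hray (x + c • u) (-c) (neg_nonneg.2 hc)).symm

lemma not_genuinelyFullDim_of_add_smul_eq {k : ℕ} {θ : Vec k → ℝ} {u : Vec k} (hu : u ≠ 0)
    (hinv : ∀ (x : Vec k) (c : ℝ), θ (x + c • u) = θ x) : ¬ GenuinelyFullDim k θ := by
  have hK : Module.finrank ℝ (ℝ ∙ u)ᗮ = Module.finrank ℝ (Vec (k - 1)) := by
    have := Submodule.finrank_add_finrank_orthogonal (ℝ ∙ u)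
    rw [finrank_span_singleton hu, finrank_euclideanSpace_fin] at this
    rw [finrank_euclideanSpace_fin]
    omega
  set K := (ℝ ∙ u)ᗮ
  let e := LinearEquiv.ofFinrankEq K (Vec (k - 1)) hK
  refine not_not.2 ⟨fun y => θ (e.symm y),
    e.toLinearMap ∘ₗ K.orthogonalProjectionOnto.toLinearMap, funext fun x => ?_⟩
  obtain ⟨c, hc⟩ : ∃ c : ℝ, c • u = x - K.starProjection x := by
    have := K.sub_starProjection_mem_orthogonal x
    rwa [Submodule.orthogonal_orthogonal, Submodule.mem_span_singleton] at this
  calc θ x = θ (K.starProjection x + c • u) := by rw [hc, add_sub_cancel]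
    _ = _ := by
      rw [hinv, Submodule.starProjection_apply]
      simp

lemma coneOfSet_eq_hull {k : ℕ} (S : Set (Vec k)) : coneOfSet S = PointedCone.hull ℝ S := by
  ext x
  simp only [coneOfSet, SetLike.mem_coe, Set.mem_ofPred_eq, Submodule.mem_span_set']
  constructor
  · rintro ⟨n, v, lam, hv, hlam, rfl⟩
    exact ⟨n, fun i => ⟨lam i, hlam i⟩, fun i => ⟨v i, hv i⟩, rfl⟩
  · rintro ⟨n, f, g, rfl⟩
    exact ⟨n, fun i => g i, fun i => f i, fun i => (g i).2, fun i => (f i).2, rfl⟩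

lemma Convex.eq_univ_of_closure_eq_univ {E : Type*} [NormedAddCommGroup E] [NormedSpace ℝ E]
    [FiniteDimensional ℝ E] {s : Set E} (hs : Convex ℝ s) (hcl : closure s = Set.univ) :
    s = Set.univ := by
  have hspan : affineSpan ℝ s = ⊤ := by
    refine eq_top_iff.2 fun x _ => ?_
    have : closure s ⊆ affineSpan ℝ s :=
      closure_minimal (subset_affineSpan ℝ s) (affineSpan ℝ s).closed_of_finiteDimensional
    exact this (hcl ▸ Set.mem_univ x)
  have := hs.interior_closure_eq_interior_of_nonempty_interior
    (hs.interior_nonempty_iff_affineSpan_eq_top.2 hspan)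
  rw [hcl, interior_univ] at this
  exact Set.eq_univ_of_univ_subset (this ▸ interior_subset)

lemma coneOfSet_eq_univ_of_forall_inner_nonpos {k : ℕ} {S : Set (Vec k)}
    (h : ∀ u : Vec k, (∀ g ∈ S, ⟪g, u⟫ ≤ 0) → u = 0) : coneOfSet S = Set.univ := by
  rw [coneOfSet_eq_hull]
  refine (PointedCone.convex _).eq_univ_of_closure_eq_univ (Set.eq_univ_of_forall fun x => ?_)
  by_contra hx
  obtain ⟨y, hy, hxy⟩ := ProperCone.hyperplane_separation' (x₀ := x)
    (Submodule.closure (PointedCone.hull ℝ S))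
    (by simpa [Submodule.mem_closure_iff, ← SetLike.mem_coe] using hx)
  have hy0 : -y = 0 := h (-y) fun g hg => by
    rw [inner_neg_right, neg_nonpos]
    exact hy g (Submodule.mem_closure_iff.2
      (Submodule.le_topologicalClosure _ (PointedCone.subset_hull hg)))
  simp [neg_eq_zero.1 hy0] at hxy

lemma le_ncard_of_coneOfSet_eq_univ {k : ℕ} {S : Set (Vec k)} (hfin : S.Finite)
    (hne : S.Nonempty) (hcone : coneOfSet S = Set.univ) : k + 1 ≤ S.ncard := by
  have hhull : ∀ x, x ∈ PointedCone.hull ℝ S := fun x => by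
    rw [← SetLike.mem_coe, ← coneOfSet_eq_hull, hcone]; trivial
  obtain ⟨g, hg⟩ := hne
  -- `-g` is a nonnegative combination of `S`, so `g` is a combination of the other generators
  have hg' : g ∈ Submodule.span ℝ (S \ {g}) := by
    have := hhull (-g)
    rw [← Set.insert_eq_of_mem hg, ← Set.insert_sdiff_singleton] at this
    obtain ⟨a, z, hz, hgz⟩ := Submodule.mem_span_insert.1 this
    have ha : (1 : ℝ) + a ≠ 0 := (by linarith [a.2] : (0 : ℝ) < 1 + a).ne'
    have hag : ((1 : ℝ) + a) • g = -z := by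
      rw [add_smul, one_smul, show (a : ℝ) • g = a • g from rfl, eq_sub_of_add_eq hgz.symm]
      abel
    have hmem := Submodule.smul_mem _ ((1 : ℝ) + a)⁻¹ (neg_mem (PointedCone.hull_le_span ℝ _ hz))
    rwa [← hag, inv_smul_smul₀ ha] at hmem
  have hspan : Submodule.span ℝ (S \ {g}) = ⊤ := by
    rw [← Submodule.span_insert_eq_span hg', Set.insert_sdiff_singleton, Set.insert_eq_of_mem hg,
      eq_top_iff]
    exact fun x _ => PointedCone.hull_le_span ℝ S (hhull x)
  have := (hfin.sdiff (t := {g})).fintype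
  have hk : k ≤ (S \ {g}).ncard := by
    calc k = Module.finrank ℝ (Submodule.span ℝ (S \ {g})) := by
          rw [hspan, finrank_top, finrank_euclideanSpace_fin]
      _ ≤ (S \ {g}).toFinset.card := finrank_span_le_card _
      _ = (S \ {g}).ncard := (Set.ncard_eq_toFinset_card' _).symm
  rw [Set.ncard_sdiff_singleton_of_mem hg] at hk
  have := (Set.ncard_pos hfin).2 ⟨g, hg⟩
  omega

lemma eq_zero_of_forall_inner_nonpos_of_genuinelyFullDim {k : ℕ} {θ : Vec k → ℝ}
    (hsub : ∀ a b : Vec k, θ (a + b) ≤ θ a + θ b)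
    (hper : ∀ (x : Vec k) (w : Fin k → ℤ), θ (x + intVec k w) = θ x)
    (hgen : GenuinelyFullDim k θ) {G : Set (Vec k)} (hG : G.Finite) {ε : ℝ} (hε : 0 < ε)
    (hloc : ∀ x : Vec k, ‖x‖ < ε → ∃ g ∈ G, θ x = ⟪g, x⟫) {u : Vec k}
    (hu : ∀ g ∈ G, ⟪g, u⟫ ≤ 0) : u = 0 := by
  have hle := exists_le_inner_of_eq_inner_of_norm_lt hsub hε hloc
  obtain ⟨M, hM⟩ := isBounded_iff_forall_norm_le.1 hG.isBounded
  have hcont : Continuous θ := by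
    refine (lipschitzWith_of_subadditive hsub (M := M) fun x => ?_).continuous
    obtain ⟨g, hg, hθ⟩ := hle x
    calc θ x ≤ ⟪g, x⟫ := hθ
      _ ≤ ‖g‖ * ‖x‖ := real_inner_le_norm g x
      _ ≤ M * ‖x‖ := by gcongr; exact hM g hg
  by_contra hu0
  refine not_genuinelyFullDim_of_add_smul_eq hu0
    (add_smul_eq_of_forall_add_smul_le hcont hper fun x t ht => ?_) hgen
  obtain ⟨g, hg, hθ⟩ := hle (t • u)
  have hray : θ (t • u) ≤ 0 := by
    rw [real_inner_smul_right] at hθ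
    nlinarith [hu g hg]
  linarith [hsub x (t • u)]

theorem statement12_general (k : ℕ) (θ : Vec k → ℝ)
    (PC : PolyhedralComplex k) (grad : Set (Vec k) → Vec k)
    (hpwl : IsPWLWith PC grad θ) (hlf : PC.LocFinite)
    (hsub : ∀ a b : Vec k, θ (a + b) ≤ θ a + θ b)
    (hper : ∀ (x : Vec k) (w : Fin k → ℤ), θ (x + intVec k w) = θ x)
    (hgen : GenuinelyFullDim k θ)
    (hfin : (gradSet PC grad).Finite)
    (hslopes : (gradSet PC grad).ncard ≤ k + 1)
    (h0 : θ 0 = 0) :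
    (gradSet PC grad).ncard = k + 1 ∧
    coneOfSet (gradSet PC grad) = Set.univ ∧
    ∀ g ∈ gradSet PC grad,
      ∃ P : Set (Vec k), IsMaximalCell PC P ∧ grad P = g ∧ (0 : Vec k) ∈ P := by
  set G := gradSetAt PC grad 0
  have hGsub : G ⊆ gradSet PC grad := fun g ⟨P, hP, hgP, _⟩ => ⟨P, hP, hgP⟩
  have hGfin : G.Finite := hfin.subset hGsub
  obtain ⟨ε, hε, hloc⟩ := hpwl.exists_eq_inner_of_norm_lt hlf h0
  have hGne : G.Nonempty := by
    obtain ⟨g, hg, -⟩ := hloc 0 (by simpa using hε)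
    exact ⟨g, hg⟩
  have hcone : coneOfSet G = Set.univ := coneOfSet_eq_univ_of_forall_inner_nonpos fun _ hu =>
    eq_zero_of_forall_inner_nonpos_of_genuinelyFullDim hsub hper hgen hGfin hε hloc hu
  have hcard : k + 1 ≤ G.ncard := le_ncard_of_coneOfSet_eq_univ hGfin hGne hcone
  have hG : G = gradSet PC grad := Set.eq_of_subset_of_ncard_le hGsub (hslopes.trans hcard) hfin
  rw [← hG]
  exact ⟨le_antisymm (hG ▸ hslopes) hcard, hcone, fun _ hg => hg⟩

/-- A genuinely k-dimensional function as in the hypotheses has exactly k+1 slopes,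
its gradients positively span `ℝ^k`, and each gradient is attained on a maximal cell
containing the origin. -/
theorem statement12 (k : ℕ) (hk : 1 ≤ k) (θ : Vec k → ℝ)
    (hnonneg : ∀ x, 0 ≤ θ x)
    (PC : PolyhedralComplex k) (grad : Set (Vec k) → Vec k)
    (hpwl : IsPWLWith PC grad θ) (hlf : PC.LocFinite)
    (hsub : ∀ a b : Vec k, θ (a + b) ≤ θ a + θ b)
    (hper : ∀ (x : Vec k) (w : Fin k → ℤ), θ (x + intVec k w) = θ x)
    (hgen : GenuinelyFullDim k θ)
    (hfin : (gradSet PC grad).Finite)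
    (hslopes : (gradSet PC grad).ncard ≤ k + 1)
    (h0 : θ 0 = 0) :
    (gradSet PC grad).ncard = k + 1 ∧
    coneOfSet (gradSet PC grad) = Set.univ ∧
    ∀ g ∈ gradSet PC grad,
      ∃ P : Set (Vec k), IsMaximalCell PC P ∧ grad P = g ∧ (0 : Vec k) ∈ P :=
  statement12_general k θ PC grad hpwl hlf hsub hper hgen hfin hslopes h0
end
end

section
/- Consider a locally finite, pure, complete polyhedral complex P in ℝ^k and let {P_i}_{i=1}^{k+1} be a partition of the set of maximal cells of P. Fix a point r ∈ ℝ^k. Then there exist μ_1, …, μ_{k+1} ∈ ℝ with μ_i ≥ 0 and ∑_{i=1}^{k+1} μ_i = 1 such that for every function θ : ℝ^k → ℝ that is piecewise linear compatible with {P_i}_{i=1}^{k+1} with gradients g^1, …, g^{k+1} corresponding to this partition, one has θ(r) = θ(0) + ∑_{i=1}^{k+1} μ_i (g^i · r). -/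
open scoped BigOperators

noncomputable section

/-!
Walk along the segment from `0` to `r`. Near any point `x` only finitely many cells occur, each
star-shaped about `x`, and a cell is determined by its trace on a neighbourhood of any of its
points; so every point lies in a maximal cell and, on either side of each point of the line, a
short piece of the line stays in one maximal cell. On such a piece of length `ℓ` in a cell of
`part i`, `θ` grows by `ℓ * ⟪g i, r⟫`. A supremum argument over `[0, 1]` adds these lengths up
into the weights `μ i`.
-/
open Filter Topology Set

theorem real_induction {α : Type*} [ConditionallyCompleteLinearOrder α] [TopologicalSpace α]
    [OrderTopology α] [DenselyOrdered α] {p : α → Prop} {a b : α} (hab : a ≤ b) (ha : p a)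
    (hleft : ∀ τ, ∀ᶠ t in 𝓝[≤] τ, p t → p τ) (hright : ∀ τ, p τ → ∀ᶠ t in 𝓝[≥] τ, p t) :
    p b := by
  set S := {t | t ∈ Icc a b ∧ p t}
  have hSne : S.Nonempty := ⟨a, ⟨le_rfl, hab⟩, ha⟩
  have hSbdd : BddAbove S := ⟨b, fun t ht => ht.1.2⟩
  have hlub : IsLUB S (sSup S) := isLUB_csSup hSne hSbdd
  have hτ : sSup S ∈ Icc a b := ⟨hlub.1 ⟨⟨le_rfl, hab⟩, ha⟩, csSup_le hSne fun t ht => ht.1.2⟩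
  have hpτ : p (sSup S) := by
    obtain ⟨t, htS, hpt⟩ := ((hlub.frequently_mem hSne).and_eventually (hleft _)).exists
    exact hpt htS.2
  obtain hτb | hτb := hτ.2.eq_or_lt
  · rwa [← hτb]
  have := nhdsGT_neBot_of_exists_gt ⟨b, hτb⟩
  obtain ⟨t, hpt, htτ, htb⟩ := (((hright _ hpτ).filter_mono
    (nhdsWithin_mono _ Ioi_subset_Ici_self)).and (Ioc_mem_nhdsGT hτb)).exists
  exact absurd (hlub.1 ⟨⟨hτ.1.trans htτ.le, htb⟩, hpt⟩) (not_le.2 htτ)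

theorem eventually_add_smul_mem {E : Type*} [AddCommGroup E] [TopologicalSpace E] [Module ℝ E]
    [ContinuousAdd E] [ContinuousSMul ℝ E] {x v : E} {U : Set E} (hU : U ∈ 𝓝 x) :
    ∀ᶠ σ in 𝓝[>] (0 : ℝ), x + σ • v ∈ U := by
  have : Tendsto (fun σ : ℝ => x + σ • v) (𝓝 0) (𝓝 x) :=
    Continuous.tendsto' (by fun_prop) 0 x (by simp)
  exact this.mono_left nhdsWithin_le_nhds hU

section

variable {k : ℕ}

theorem mem_image_add_inter_ball {C S : Set (Vec k)} {x z : Vec k} {ε : ℝ}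
    (hS : S = (fun w => w + x) '' C ∩ Metric.ball x ε) :
    z ∈ S ↔ z - x ∈ C ∧ z ∈ Metric.ball x ε := by
  simp [hS, image_add_right, sub_eq_add_neg]

theorem IsPolyhedron.convex {P : Set (Vec k)} (h : IsPolyhedron P) : Convex ℝ P := by
  obtain ⟨n, a, b, rfl⟩ := h
  rw [show {x | ∀ i, inner ℝ (a i) x ≤ b i} = ⋂ i, {x | inner ℝ (a i) x ≤ b i} by ext; simp]
  exact convex_iInter fun i => convex_halfSpace_le (innerₛₗ ℝ (a i)).isLinear (b i)

theorem IsFace.eq_of_inter_subset {F Q U : Set (Vec k)} {y : Vec k} (hF : IsFace F Q)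
    (hQ : Convex ℝ Q) (hy : y ∈ F) (hU : U ∈ 𝓝 y) (hsub : Q ∩ U ⊆ F) : F = Q := by
  obtain ⟨a, b, -, rfl⟩ := hF
  refine (sep_subset _ _).antisymm fun q hq => ⟨hq, ?_⟩
  obtain ⟨σ, hσU, hσ0, hσ1⟩ :=
    ((eventually_add_smul_mem (v := q - y) hU).and (Ioc_mem_nhdsGT zero_lt_one)).exists
  have hz := (hsub ⟨hQ.add_smul_sub_mem hy.1 hq ⟨hσ0.le, hσ1⟩, hσU⟩).2
  rw [inner_add_right, real_inner_smul_right, inner_sub_right, hy.2] at hz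
  have : σ * (inner ℝ a q - b) = 0 := by linarith
  linarith [(mul_eq_zero.1 this).resolve_left hσ0.ne']

namespace PolyhedralComplex

variable {PC : PolyhedralComplex k}

theorem eq_of_inter_eq {P Q U : Set (Vec k)} {y : Vec k} (hP : P ∈ PC.cells) (hQ : Q ∈ PC.cells)
    (hyP : y ∈ P) (hyQ : y ∈ Q) (hU : U ∈ 𝓝 y) (h : P ∩ U = Q ∩ U) : P = Q := by
  obtain ⟨hfP, hfQ⟩ := PC.inter_face P hP Q hQ
  have hPQ : P ∩ Q = P := hfP.eq_of_inter_subset (PC.poly P hP).convex ⟨hyP, hyQ⟩ hU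
    fun z hz => ⟨hz.1, (h ▸ hz).1⟩
  have hQP : P ∩ Q = Q := hfQ.eq_of_inter_subset (PC.poly Q hQ).convex ⟨hyP, hyQ⟩ hU
    fun z hz => ⟨(h ▸ hz).1, hz.1⟩
  rw [← hPQ, hQP]

theorem LocFinite.finite_cells_mem (hlf : PC.LocFinite) (y : Vec k) :
    {P | P ∈ PC.cells ∧ y ∈ P}.Finite := by
  obtain ⟨ε, hε, F, ⟨hFfin, -⟩, hset⟩ := hlf y
  refine Finite.of_finite_image (f := (· ∩ Metric.ball y ε)) ?_ ?_
  · refine (hFfin.image fun C => (fun w => w + y) '' C ∩ Metric.ball y ε).subset ?_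
    rintro _ ⟨P, ⟨hP, hyP⟩, rfl⟩
    have : P ∩ Metric.ball y ε ∈ {S | ∃ P ∈ PC.cells, S = P ∩ Metric.ball y ε ∧ S.Nonempty} :=
      ⟨P, hP, rfl, y, hyP, Metric.mem_ball_self hε⟩
    obtain ⟨C, hC, hPC, -⟩ := hset ▸ this
    exact ⟨C, hC, hPC.symm⟩
  · rintro P ⟨hP, hyP⟩ Q ⟨hQ, hyQ⟩ h
    exact eq_of_inter_eq hP hQ hyP hyQ (Metric.ball_mem_nhds y hε) h

theorem exists_isMaximalCell_mem (hlf : PC.LocFinite) (hcomp : PC.Complete) (y : Vec k) :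
    ∃ P, IsMaximalCell PC P ∧ y ∈ P := by
  have hne : {P | P ∈ PC.cells ∧ y ∈ P}.Nonempty := by
    obtain ⟨P, hP, hyP⟩ := mem_sUnion.1 (hcomp ▸ mem_univ y)
    exact ⟨P, hP, hyP⟩
  obtain ⟨P, ⟨hP, hyP⟩, hmax⟩ := (hlf.finite_cells_mem y).exists_maximal hne
  exact ⟨P, ⟨hP, fun Q hQ hPQ => (hmax ⟨hQ, hPQ hyP⟩ hPQ).antisymm hPQ⟩, hyP⟩

theorem LocFinite.exists_segment_subset (hlf : PC.LocFinite) (x : Vec k) :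
    ∃ ε > 0, ∀ P ∈ PC.cells, ∀ y ∈ P, y ∈ Metric.ball x ε → segment ℝ x y ⊆ P := by
  obtain ⟨ε, hε, F, ⟨-, hcone⟩, hset⟩ := hlf x
  refine ⟨ε, hε, fun P hP y hyP hyB => ?_⟩
  have : P ∩ Metric.ball x ε ∈ {S | ∃ P ∈ PC.cells, S = P ∩ Metric.ball x ε ∧ S.Nonempty} :=
    ⟨P, hP, rfl, y, hyP, hyB⟩
  obtain ⟨C, hC, hPC, -⟩ := hset ▸ this
  have hyC : y - x ∈ C := ((mem_image_add_inter_ball hPC).1 ⟨hyP, hyB⟩).1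
  intro z hz
  have hzB := (convex_ball x ε).segment_subset (Metric.mem_ball_self hε) hyB hz
  rw [segment_eq_image'] at hz
  obtain ⟨t, ht, rfl⟩ := hz
  have hzC : x + t • (y - x) - x ∈ C := by simpa using hcone C hC _ hyC t ht.1
  exact ((mem_image_add_inter_ball hPC).2 ⟨hzC, hzB⟩).1

theorem exists_isMaximalCell_ray (hlf : PC.LocFinite) (hcomp : PC.Complete) (x d : Vec k) :
    ∃ s : ℝ, 0 < s ∧ ∃ P, IsMaximalCell PC P ∧ ∀ u ∈ Icc 0 s, x + u • d ∈ P := by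
  obtain ⟨ε, hε, hseg⟩ := hlf.exists_segment_subset x
  obtain ⟨s, hsB, hs⟩ :=
    ((eventually_add_smul_mem (v := d) (Metric.ball_mem_nhds x hε)).and
      self_mem_nhdsWithin).exists
  obtain ⟨P, hP, hyP⟩ := exists_isMaximalCell_mem hlf hcomp (x + s • d)
  refine ⟨s, hs, P, hP, fun u hu => hseg P hP.1 _ hyP hsB ?_⟩
  rw [segment_eq_image']
  refine ⟨u / s, ⟨div_nonneg hu.1 hs.le, div_le_one_of_le₀ hu.2 hs.le⟩, ?_⟩
  simp only [add_sub_cancel_left, smul_smul, div_mul_cancel₀ _ hs.ne']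

end PolyhedralComplex

section LineWeights

variable {ι : Type*} [Fintype ι]

def IsPWLCompatible (part : ι → Set (Set (Vec k))) (θ : Vec k → ℝ) (g : ι → Vec k) : Prop :=
  ∀ i, ∀ P ∈ part i, ∃ δ : ℝ, ∀ x ∈ P, θ x = (inner ℝ (g i) x : ℝ) + δ

/-- The weights `μ i` arise as the time that the path `s ↦ s • r`, `0 ≤ s ≤ t`, spends in cells
of `part i`. -/
def HasLineWeights (part : ι → Set (Set (Vec k))) (r : Vec k) (t : ℝ) : Prop :=
  ∃ μ : ι → ℝ, (∀ i, 0 ≤ μ i) ∧ ∑ i, μ i = t ∧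
    ∀ θ g, IsPWLCompatible part θ g → θ (t • r) = θ 0 + ∑ i, μ i * (inner ℝ (g i) r : ℝ)

variable {part : ι → Set (Set (Vec k))} {r : Vec k}

theorem hasLineWeights_zero : HasLineWeights part r 0 :=
  ⟨0, fun _ => le_rfl, by simp, fun θ g _ => by simp⟩

theorem HasLineWeights.of_mem_cell {t t' : ℝ} {i : ι} {P : Set (Vec k)}
    (h : HasLineWeights part r t) (htt' : t ≤ t') (hP : P ∈ part i) (ht : t • r ∈ P)
    (ht' : t' • r ∈ P) : HasLineWeights part r t' := by
  classical
  obtain ⟨μ, hμ0, hμt, hμθ⟩ := h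
  refine ⟨μ + Pi.single i (t' - t), fun j => ?_, ?_, fun θ g hθ => ?_⟩
  · have : 0 ≤ (Pi.single i (t' - t) : ι → ℝ) j := by
      rcases eq_or_ne j i with rfl | hj <;> simp [*]
    exact add_nonneg (hμ0 j) this
  · simp [Finset.sum_add_distrib, hμt]
  · obtain ⟨δ, hδ⟩ := hθ i P hP
    have hstep : θ (t' • r) = θ (t • r) + (t' - t) * inner ℝ (g i) r := by
      rw [hδ _ ht', hδ _ ht, real_inner_smul_right, real_inner_smul_right]
      ring
    simp only [hstep, hμθ θ g hθ, Pi.add_apply, add_mul, Finset.sum_add_distrib,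
      Pi.single_apply, ite_mul, zero_mul, Finset.sum_ite_eq', Finset.mem_univ, if_true]
    ring

end LineWeights

end

theorem statement13_general (k : ℕ) (PC : PolyhedralComplex k)
    (hlf : PC.LocFinite) (hcomp : PC.Complete)
    (part : Fin (k + 1) → Set (Set (Vec k)))
    (hpart_cover : ∀ P : Set (Vec k), IsMaximalCell PC P → ∃! i, P ∈ part i)
    (r : Vec k) :
    ∃ μ : Fin (k + 1) → ℝ, (∀ i, 0 ≤ μ i) ∧ ∑ i, μ i = 1 ∧
      ∀ (θ : Vec k → ℝ) (g : Fin (k + 1) → Vec k),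
        (∀ i, ∀ P ∈ part i, ∃ δ : ℝ, ∀ x ∈ P, θ x = (inner ℝ (g i) x : ℝ) + δ) →
        θ r = θ 0 + ∑ i, μ i * (inner ℝ (g i) r : ℝ) := by
  have hleft : ∀ τ : ℝ, ∀ᶠ t in 𝓝[≤] τ, HasLineWeights part r t → HasLineWeights part r τ := by
    intro τ
    obtain ⟨s, hs, P, hP, hray⟩ := PC.exists_isMaximalCell_ray hlf hcomp (τ • r) (-r)
    obtain ⟨i, hi, -⟩ := hpart_cover P hP
    filter_upwards [Icc_mem_nhdsLE (sub_lt_self τ hs)] with t ht hwt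
    refine hwt.of_mem_cell ht.2 hi ?_ (by simpa using hray 0 ⟨le_rfl, hs.le⟩)
    convert hray (τ - t) ⟨sub_nonneg.2 ht.2, by linarith [ht.1]⟩ using 1
    module
  have hright : ∀ τ : ℝ, HasLineWeights part r τ → ∀ᶠ t in 𝓝[≥] τ, HasLineWeights part r t := by
    intro τ hwτ
    obtain ⟨s, hs, P, hP, hray⟩ := PC.exists_isMaximalCell_ray hlf hcomp (τ • r) r
    obtain ⟨i, hi, -⟩ := hpart_cover P hP
    filter_upwards [Icc_mem_nhdsGE (lt_add_of_pos_right τ hs)] with t ht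
    refine hwτ.of_mem_cell ht.1 hi (by simpa using hray 0 ⟨le_rfl, hs.le⟩) ?_
    convert hray (t - τ) ⟨sub_nonneg.2 ht.1, by linarith [ht.2]⟩ using 1
    module
  obtain ⟨μ, hμ0, hμ1, hμθ⟩ := real_induction zero_le_one hasLineWeights_zero hleft hright
  exact ⟨μ, hμ0, hμ1, fun θ g hθ => by simpa using hμθ θ g hθ⟩

/-- Line-integral lemma: the value of any compatible piecewise linear function at `r`
is a fixed convex combination of its gradients applied to `r`. -/
theorem statement13 (k : ℕ) (PC : PolyhedralComplex k)
    (hlf : PC.LocFinite) (hpure : PC.Pure) (hcomp : PC.Complete)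
    (part : Fin (k + 1) → Set (Set (Vec k)))
    (hpart_max : ∀ i, ∀ P ∈ part i, IsMaximalCell PC P)
    (hpart_cover : ∀ P : Set (Vec k), IsMaximalCell PC P → ∃! i, P ∈ part i)
    (r : Vec k) :
    ∃ μ : Fin (k + 1) → ℝ, (∀ i, 0 ≤ μ i) ∧ ∑ i, μ i = 1 ∧
      ∀ (θ : Vec k → ℝ) (g : Fin (k + 1) → Vec k),
        (∀ i, ∀ P ∈ part i, ∃ δ : ℝ, ∀ x ∈ P, θ x = (inner ℝ (g i) x : ℝ) + δ) →
        θ r = θ 0 + ∑ i, μ i * (inner ℝ (g i) r : ℝ) :=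
  statement13_general k PC hlf hcomp part hpart_cover r
end
end

section
/- (Interval Lemma) Let θ : ℝ → ℝ be a function bounded on every bounded interval. Given real numbers u_1 < u_2 and v_1 < v_2, let U = [u_1, u_2], V = [v_1, v_2], and U + V = [u_1 + v_1, u_2 + v_2]. If θ(u) + θ(v) = θ(u + v) for every u ∈ U and v ∈ V, then there exists c ∈ ℝ such that θ(u) = θ(u_1) + c(u − u_1) for every u ∈ U, θ(v) = θ(v_1) + c(v − v_1) for every v ∈ V, and θ(w) = θ(u_1 + v_1) + c(w − u_1 − v_1) for every w ∈ U + V. -/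
open scoped BigOperators

noncomputable section

/-! Translating `U` and `V` to `[0, a]` and `[0, b]` turns the hypothesis into the Pexider
equation `f x + g y = h (x + y)`, and then `F = h - h 0` is additive on `[0, a] × [0, b]`.
Assume `a ≤ b`. On `[0, a]` the function `H t = F t - (F a / a) t` is additive, bounded and
vanishes at `a`, hence at every multiple of `a / n`; writing `t = k (a / n) + s` with
`n s ≤ a` gives `n |H t| = |H (n s)| ≤ B`, so `H = 0`. Peeling off steps of length `a`
then extends linearity from `[0, a]` to `[0, a + b]`. -/

open Set

theorem map_nat_mul_of_add_on_triangle {H : ℝ → ℝ} {m : ℝ}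
    (hadd : ∀ x y, 0 ≤ x → 0 ≤ y → x + y ≤ m → H (x + y) = H x + H y)
    (n : ℕ) {t : ℝ} (ht : 0 ≤ t) (hnt : n * t ≤ m) : H (n * t) = n * H t := by
  induction n with
  | zero =>
    have h0 := hadd 0 0 le_rfl le_rfl (by simpa using hnt)
    simp only [add_zero] at h0
    simp only [Nat.cast_zero, zero_mul]
    linarith
  | succ n ih =>
    push_cast at hnt ⊢
    rw [add_one_mul, hadd _ _ (by positivity) ht (by linarith), ih (by nlinarith)]
    ring

theorem eq_zero_of_add_on_triangle {H : ℝ → ℝ} {m B : ℝ} (hm : 0 < m)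
    (hadd : ∀ x y, 0 ≤ x → 0 ≤ y → x + y ≤ m → H (x + y) = H x + H y)
    (hbd : ∀ t ∈ Icc 0 m, |H t| ≤ B) (hHm : H m = 0) {t : ℝ} (ht : t ∈ Icc 0 m) :
    H t = 0 := by
  have hsmall : ∀ n : ℕ, ∀ s, 0 ≤ s → n * s ≤ m → n * |H s| ≤ B := by
    intro n s hs hns
    have := hbd _ ⟨by positivity, hns⟩
    rwa [map_nat_mul_of_add_on_triangle hadd n hs hns, abs_mul, Nat.abs_cast] at this
  have hbound : ∀ n : ℕ, 0 < n → n * |H t| ≤ B := by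
    intro n hn
    have hn' : (0 : ℝ) < n := Nat.cast_pos.2 hn
    set q := m / n
    have hq : 0 < q := by positivity
    have hnq : n * q = m := mul_div_cancel₀ m hn'.ne'
    have hHq : H q = 0 := by
      have := map_nat_mul_of_add_on_triangle hadd n hq.le hnq.le
      rw [hnq, hHm] at this
      exact (mul_eq_zero.1 this.symm).resolve_left hn'.ne'
    set k := ⌊t / q⌋₊
    have hkq : k * q ≤ t := (le_div_iff₀ hq).1 (Nat.floor_le (div_nonneg ht.1 hq.le))
    have hns : n * (t - k * q) ≤ m := by
      have := (div_lt_iff₀ hq).1 (Nat.lt_floor_add_one (t / q))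
      nlinarith
    have hsplit := hadd (k * q) (t - k * q) (by positivity) (sub_nonneg.2 hkq) (by linarith [ht.2])
    rw [add_sub_cancel, map_nat_mul_of_add_on_triangle hadd k hq.le (hkq.trans ht.2), hHq,
      mul_zero, zero_add] at hsplit
    rw [hsplit]
    exact hsmall n _ (sub_nonneg.2 hkq) hns
  by_contra hne
  have hpos : 0 < |H t| := abs_pos.2 hne
  obtain ⟨n, hn⟩ := exists_nat_gt (B / |H t|)
  have := hbound (n + 1) n.succ_pos
  rw [div_lt_iff₀ hpos] at hn
  push_cast at this
  nlinarith

theorem exists_eq_mul_of_add_on_triangle {G : ℝ → ℝ} {m : ℝ} (hm : 0 < m)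
    (hadd : ∀ x y, 0 ≤ x → 0 ≤ y → x + y ≤ m → G (x + y) = G x + G y)
    (hbd : ∃ B, ∀ t ∈ Icc 0 m, |G t| ≤ B) : ∃ c, ∀ t ∈ Icc 0 m, G t = c * t := by
  obtain ⟨B, hB⟩ := hbd
  set c := G m / m
  refine ⟨c, fun t ht => sub_eq_zero.1 ?_⟩
  refine eq_zero_of_add_on_triangle (H := fun t => G t - c * t) (B := B + |c| * m) hm
    (fun x y hx hy hxy => ?_) (fun s hs => ?_) ?_ ht
  · rw [hadd x y hx hy hxy]
    ring
  · calc |G s - c * s| ≤ |G s| + |c * s| := abs_sub _ _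
      _ ≤ B + |c| * m := by
        rw [abs_mul, abs_of_nonneg hs.1]
        gcongr
        exacts [hB s hs, hs.2]
  · simp only [c, div_mul_cancel₀ _ hm.ne', sub_self]

theorem eq_mul_on_Icc_add_of_add_on_rect {F : ℝ → ℝ} {a b c : ℝ} (ha : 0 < a)
    (hadd : ∀ x ∈ Icc 0 a, ∀ y ∈ Icc 0 b, F (x + y) = F x + F y)
    (hlin : ∀ t ∈ Icc 0 a, F t = c * t) : ∀ t ∈ Icc 0 (a + b), F t = c * t := by
  suffices h : ∀ n : ℕ, ∀ t ∈ Icc 0 (a + b), t ≤ n * a → F t = c * t by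
    intro t ht
    obtain ⟨n, hn⟩ := exists_nat_ge (t / a)
    exact h n t ht ((div_le_iff₀ ha).1 hn)
  intro n
  induction n with
  | zero =>
    intro t ht htn
    exact hlin t ⟨ht.1, by simp only [Nat.cast_zero, zero_mul] at htn; linarith⟩
  | succ n ih =>
    intro t ⟨ht0, htab⟩ htn
    rcases le_or_gt t a with hta | hta
    · exact hlin t ⟨ht0, hta⟩
    have hsplit := hadd a ⟨ha.le, le_rfl⟩ (t - a) ⟨by linarith, by linarith⟩
    rw [add_sub_cancel] at hsplit
    push_cast at htn
    rw [hsplit, hlin a ⟨ha.le, le_rfl⟩, ih (t - a) ⟨by linarith, by linarith⟩ (by linarith)]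
    ring

theorem exists_eq_mul_of_add_on_rect {F : ℝ → ℝ} {a b : ℝ} (ha : 0 < a) (hb : 0 < b)
    (hadd : ∀ x ∈ Icc 0 a, ∀ y ∈ Icc 0 b, F (x + y) = F x + F y)
    (hbd : ∃ B, ∀ t ∈ Icc 0 (a + b), |F t| ≤ B) : ∃ c, ∀ t ∈ Icc 0 (a + b), F t = c * t := by
  wlog hab : a ≤ b generalizing a b
  · rw [add_comm] at hbd ⊢
    exact this hb ha (fun x hx y hy => by rw [add_comm, hadd y hy x hx, add_comm]) hbd
      (le_of_not_ge hab)
  obtain ⟨B, hB⟩ := hbd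
  obtain ⟨c, hc⟩ := exists_eq_mul_of_add_on_triangle ha
    (fun x y hx hy hxy => hadd x ⟨hx, by linarith⟩ y ⟨hy, by linarith⟩)
    ⟨B, fun t ht => hB t ⟨ht.1, by linarith [ht.2]⟩⟩
  exact ⟨c, eq_mul_on_Icc_add_of_add_on_rect ha hadd hc⟩

theorem exists_affine_of_add_eq_on_Icc {f g h : ℝ → ℝ} {a b : ℝ} (ha : 0 < a) (hb : 0 < b)
    (hbd : ∃ B, ∀ t ∈ Icc 0 (a + b), |h t| ≤ B)
    (hfgh : ∀ x ∈ Icc 0 a, ∀ y ∈ Icc 0 b, f x + g y = h (x + y)) :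
    ∃ c, (∀ x ∈ Icc 0 a, f x = f 0 + c * x) ∧ (∀ y ∈ Icc 0 b, g y = g 0 + c * y) ∧
      ∀ t ∈ Icc 0 (a + b), h t = h 0 + c * t := by
  have h0a : (0 : ℝ) ∈ Icc 0 a := ⟨le_rfl, ha.le⟩
  have h0b : (0 : ℝ) ∈ Icc 0 b := ⟨le_rfl, hb.le⟩
  have h00 := hfgh 0 h0a 0 h0b
  rw [add_zero] at h00
  have hf : ∀ x ∈ Icc 0 a, f x = f 0 + (h x - h 0) := fun x hx => by
    have := hfgh x hx 0 h0b
    rw [add_zero] at this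
    linarith
  have hg : ∀ y ∈ Icc 0 b, g y = g 0 + (h y - h 0) := fun y hy => by
    have := hfgh 0 h0a y hy
    rw [zero_add] at this
    linarith
  obtain ⟨B, hB⟩ := hbd
  have h0ab : (0 : ℝ) ∈ Icc 0 (a + b) := ⟨le_rfl, by linarith⟩
  obtain ⟨c, hc⟩ := exists_eq_mul_of_add_on_rect (F := fun t => h t - h 0) ha hb
    (fun x hx y hy => by linarith [hfgh x hx y hy, hf x hx, hg y hy])
    ⟨B + B, fun t ht => (abs_sub _ _).trans (add_le_add (hB t ht) (hB 0 h0ab))⟩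
  have hAB : ∀ x ∈ Icc 0 a, x ∈ Icc 0 (a + b) := fun x hx => ⟨hx.1, by linarith [hx.2]⟩
  have hBB : ∀ y ∈ Icc 0 b, y ∈ Icc 0 (a + b) := fun y hy => ⟨hy.1, by linarith [hy.2]⟩
  refine ⟨c, fun x hx => ?_, fun y hy => ?_, fun t ht => ?_⟩
  · rw [hf x hx, hc x (hAB x hx)]
  · rw [hg y hy, hc y (hBB y hy)]
  · linarith [hc t ht]

/-- Interval Lemma. -/
theorem statement14 (θ : ℝ → ℝ)
    (hbd : ∀ a b : ℝ, ∃ M : ℝ, ∀ x ∈ Set.Icc a b, |θ x| ≤ M)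
    (u₁ u₂ v₁ v₂ : ℝ) (hu : u₁ < u₂) (hv : v₁ < v₂)
    (hadd : ∀ u ∈ Set.Icc u₁ u₂, ∀ v ∈ Set.Icc v₁ v₂, θ u + θ v = θ (u + v)) :
    ∃ c : ℝ,
      (∀ u ∈ Set.Icc u₁ u₂, θ u = θ u₁ + c * (u - u₁)) ∧
      (∀ v ∈ Set.Icc v₁ v₂, θ v = θ v₁ + c * (v - v₁)) ∧
      (∀ w ∈ Set.Icc (u₁ + v₁) (u₂ + v₂), θ w = θ (u₁ + v₁) + c * (w - u₁ - v₁)) := by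
  obtain ⟨M, hM⟩ := hbd (u₁ + v₁) (u₂ + v₂)
  obtain ⟨c, hU, hV, hW⟩ := exists_affine_of_add_eq_on_Icc (f := fun x => θ (u₁ + x))
    (g := fun y => θ (v₁ + y)) (h := fun t => θ (u₁ + v₁ + t)) (sub_pos.2 hu) (sub_pos.2 hv)
    ⟨M, fun t ht => hM _ ⟨by linarith [ht.1], by linarith [ht.2]⟩⟩
    (fun x hx y hy => by
      rw [hadd (u₁ + x) ⟨by linarith [hx.1], by linarith [hx.2]⟩ (v₁ + y)
        ⟨by linarith [hy.1], by linarith [hy.2]⟩]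
      ring_nf)
  refine ⟨c, fun u hu' => ?_, fun v hv' => ?_, fun w hw => ?_⟩
  · simpa using hU (u - u₁) ⟨by linarith [hu'.1], by linarith [hu'.2]⟩
  · simpa using hV (v - v₁) ⟨by linarith [hv'.1], by linarith [hv'.2]⟩
  · convert hW (w - u₁ - v₁) ⟨by linarith [hw.1], by linarith [hw.2]⟩ using 2 <;> ring_nf
end
end
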